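/- arXiv:2512.24030 — 8 statements merged into one kernel-verified Lean document; each statement's English description precedes it below -/
import Mathlib

section
/- Let (e,h,f) be an sl₂-triple in Matrix (Fin n) (Fin n) ℂ. Define linear endomorphisms of Matrix (Fin n) (Fin n) ℂ by Ê(B) = e*B + B*e, Ĥ(B) = h*B - B*h, and F̂(B) = f*B + B*f. Then, as linear maps, Ĥ ∘ Ê - Ê ∘ Ĥ = 2•Ê, Ĥ ∘ F̂ - F̂ ∘ Ĥ = -(2•F̂), and Ê ∘ F̂ - F̂ ∘ Ê = Ĥ; that is, (Ê, Ĥ, F̂) is an sl₂-triple in End(Matrix (Fin n) (Fin n) ℂ). -/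
/-- The linear endomorphism `Ê : B ↦ e*B + B*e` of `Matrix (Fin n) (Fin n) ℂ`
(the super-adjoint action of the odd element `E = (0, e)` on the odd part). -/
noncomputable def hatE {n : ℕ} (e : Matrix (Fin n) (Fin n) ℂ) :
    Matrix (Fin n) (Fin n) ℂ →ₗ[ℂ] Matrix (Fin n) (Fin n) ℂ :=
  LinearMap.mulLeft ℂ e + LinearMap.mulRight ℂ e

/-- The linear endomorphism `Ĥ : B ↦ h*B - B*h` of `Matrix (Fin n) (Fin n) ℂ`. -/
noncomputable def hatH {n : ℕ} (h : Matrix (Fin n) (Fin n) ℂ) :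
    Matrix (Fin n) (Fin n) ℂ →ₗ[ℂ] Matrix (Fin n) (Fin n) ℂ :=
  LinearMap.mulLeft ℂ h - LinearMap.mulRight ℂ h

/-- The linear endomorphism `F̂ : B ↦ f*B + B*f` of `Matrix (Fin n) (Fin n) ℂ`. -/
noncomputable def hatF {n : ℕ} (f : Matrix (Fin n) (Fin n) ℂ) :
    Matrix (Fin n) (Fin n) ℂ →ₗ[ℂ] Matrix (Fin n) (Fin n) ℂ :=
  LinearMap.mulLeft ℂ f + LinearMap.mulRight ℂ f

/-- If `(e, h, f)` is an `sl₂`-triple of `n × n` complex matrices, then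
`(Ê, Ĥ, F̂)` is an `sl₂`-triple of linear endomorphisms of `Matrix (Fin n) (Fin n) ℂ`. -/
theorem stmt3 (n : ℕ) (e h f : Matrix (Fin n) (Fin n) ℂ)
    (h1 : h * e - e * h = 2 • e) (h2 : h * f - f * h = -(2 • f))
    (h3 : e * f - f * e = h) :
    hatH h ∘ₗ hatE e - hatE e ∘ₗ hatH h = 2 • hatE e ∧
    hatH h ∘ₗ hatF f - hatF f ∘ₗ hatH h = -(2 • hatF f) ∧
    hatE e ∘ₗ hatF f - hatF f ∘ₗ hatE e = hatH h := by
  refine ⟨?_, ?_, ?_⟩ <;> refine LinearMap.ext fun B => ?_ <;>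
    simp only [hatE, hatH, hatF, LinearMap.sub_apply, LinearMap.add_apply,
      LinearMap.comp_apply, LinearMap.smul_apply, LinearMap.neg_apply,
      LinearMap.mulLeft_apply, LinearMap.mulRight_apply]
  · calc h * (e * B + B * e) - (e * B + B * e) * h - (e * (h * B - B * h) + (h * B - B * h) * e)
        = (h * e - e * h) * B + B * (h * e - e * h) := by noncomm_ring
      _ = 2 • (e * B + B * e) := by rw [h1, smul_add, smul_mul_assoc, mul_smul_comm]
  · calc h * (f * B + B * f) - (f * B + B * f) * h - (f * (h * B - B * h) + (h * B - B * h) * f)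
        = (h * f - f * h) * B + B * (h * f - f * h) := by noncomm_ring
      _ = -(2 • (f * B + B * f)) := by
          rw [h2]
          simp only [smul_add, neg_mul, mul_neg, smul_mul_assoc, mul_smul_comm, neg_add]
  · calc e * (f * B + B * f) + (f * B + B * f) * e - (f * (e * B + B * e) + (e * B + B * e) * f)
        = (e * f - f * e) * B - B * (e * f - f * e) := by noncomm_ring
      _ = h * B - B * h := by rw [h3]
end

section
/- Let (e,h,f) be an sl₂-triple in Matrix (Fin n) (Fin n) ℂ. Consider the subspaces of pairs U₁ := {(A,B) : e*A = A*e ∧ e*B + B*e = 0} and U₂ := {(f*C - C*f, f*D + D*f) : C, D : Matrix (Fin n) (Fin n) ℂ}. Then U₁ ∩ U₂ = {(0,0)} and U₁ + U₂ is the whole space of pairs; i.e. every pair (A,B) of n×n complex matrices decomposes uniquely as a sum of an element of U₁ and an element of U₂. -/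
/-- The super-centralizer `g^E` of the odd element `E = (0, e)` in the pair model of
the queer Lie superalgebra `q(n)`: pairs `(A, B)` with `e*A = A*e` and `e*B + B*e = 0`. -/
def centE {n : ℕ} (e : Matrix (Fin n) (Fin n) ℂ) :
    Set (Matrix (Fin n) (Fin n) ℂ × Matrix (Fin n) (Fin n) ℂ) :=
  {p | e * p.1 = p.1 * e ∧ e * p.2 + p.2 * e = 0}

/-- The subspace `Π[g, F]` in the pair model of `q(n)`, where `F = (0, f)` and `Π` is
the parity flip: pairs of the form `(f*C - C*f, f*D + D*f)`. -/
def piBracketF {n : ℕ} (f : Matrix (Fin n) (Fin n) ℂ) :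
    Set (Matrix (Fin n) (Fin n) ℂ × Matrix (Fin n) (Fin n) ℂ) :=
  {p | ∃ C D : Matrix (Fin n) (Fin n) ℂ, p = (f * C - C * f, f * D + D * f)}

/-!
Write `Ẽ = Π ∘ ad E`, `F̃ = Π ∘ ad F` and `H̃ = ad (h, 0)` as operators on the pairs. The
relations of `q(n)` make `(Ẽ, H̃, F̃)` an `sl₂`-triple of endomorphisms, with `g^E = ker Ẽ` and
`Π[g, F] = range F̃`, so it suffices that `V = ker E ⊕ range F` for every `sl₂`-triple of
endomorphisms of a finite-dimensional complex space `V`.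

Disjointness: `ker E ∩ range F` is `H`-stable, so a nonzero element of it may be taken to be an
`H`-eigenvector `x`, hence primitive of some weight `n ∈ ℕ`, and `s = Fⁿ x ≠ 0` satisfies
`F s = 0`. From `s = Fⁿ⁺¹ y` one climbs with `E`: if `Fᵐ w = s` with `m > n`, then `Fᵐ⁺¹ (E w)`
is a nonzero multiple of `s`. So `s` lies in the range of every power of `F`, contradicting the
nilpotency of `F`. The sum is everything by counting dimensions against the same statement for
the triple `(F, -H, E)`.
-/

open LinearMap (ker range mem_ker mulLeft mulRight)

attribute [local instance 100] LieRing.ofAssociativeRing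

section Ring

variable {A : Type*} [Ring A]

theorem lie_pow_of_lie_eq_neg_nsmul {H F : A} {c : ℕ} (hHF : ⁅H, F⁆ = -(c • F)) (m : ℕ) :
    ⁅H, F ^ m⁆ = -((m * c) • F ^ m) := by
  induction m with
  | zero => simp [Ring.lie_def]
  | succ m ih =>
    rw [Ring.lie_def] at *
    calc H * F ^ (m + 1) - F ^ (m + 1) * H
        = (H * F ^ m - F ^ m * H) * F + F ^ m * (H * F - F * H) := by
          rw [pow_succ]; noncomm_ring
      _ = _ := by
          rw [ih, hHF, pow_succ]
          simp only [neg_mul, mul_neg, smul_mul_assoc, mul_smul_comm]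
          module

theorem lie_pow_succ_of_lie_eq {E H F : A} (hHF : ⁅H, F⁆ = -(2 • F)) (hEF : ⁅E, F⁆ = H)
    (m : ℕ) : ⁅E, F ^ (m + 1)⁆ = (m + 1) • (H * F ^ m) + (m * (m + 1)) • F ^ m := by
  induction m with
  | zero => simpa using hEF
  | succ m ih =>
    have hHFm := lie_pow_of_lie_eq_neg_nsmul hHF (m + 1)
    rw [Ring.lie_def] at *
    calc E * F ^ (m + 1 + 1) - F ^ (m + 1 + 1) * E
        = (E * F ^ (m + 1) - F ^ (m + 1) * E) * F + F ^ (m + 1) * (E * F - F * E) := by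
          rw [pow_succ _ (m + 1)]; noncomm_ring
      _ = _ := by
          rw [ih, hEF, ← sub_sub_cancel (H * F ^ (m + 1)) (F ^ (m + 1) * H), hHFm]
          simp only [add_mul, smul_mul_assoc, mul_assoc, ← pow_succ]
          module

theorem isNilpotent_of_lie_eq_neg_nsmul {K : Type*} [Field K] [CharZero K] [Algebra K A]
    [FiniteDimensional K A] {H F : A} {c : ℕ} (hc : c ≠ 0) (hHF : ⁅H, F⁆ = -(c • F)) :
    IsNilpotent F := by
  by_contra hF
  let adH : Module.End K A := mulLeft K H - mulRight K H
  -- the powers `Fᵐ ≠ 0` would give infinitely many distinct eigenvalues `-m c` of `ad H`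
  have hEigen (m : ℕ) : adH.HasEigenvalue (-(m * c : K)) := by
    refine Module.End.hasEigenvalue_of_hasEigenvector ⟨?_, fun h => hF ⟨m, h⟩⟩
    have hm := lie_pow_of_lie_eq_neg_nsmul hHF m
    rw [Ring.lie_def] at hm
    rw [Module.End.mem_eigenspace_iff]
    simp only [adH, LinearMap.sub_apply, LinearMap.mulLeft_apply, LinearMap.mulRight_apply, hm]
    rw [neg_smul, ← Nat.cast_mul, Nat.cast_smul_eq_nsmul]
  refine Set.infinite_of_injective_forall_mem (fun m n hmn => ?_) hEigen adH.finite_hasEigenvalue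
  simpa [hc] using hmn

end Ring

section Sl2

variable {K V : Type*} [Field K] [AddCommGroup V] [Module K V]

theorem pow_succ_apply_apply_eq {E H F : Module.End K V} (hHF : ⁅H, F⁆ = -(2 • F))
    (hEF : ⁅E, F⁆ = H) {m : ℕ} {μ : K} {w s : V} (hw : (F ^ m) w = s) (hFs : F s = 0)
    (hHs : H s = μ • s) : (F ^ (m + 1)) (E w) = -((m + 1) * (μ + m)) • s := by
  have hFw : (F ^ (m + 1)) w = 0 := by rw [pow_succ', Module.End.mul_apply, hw, hFs]
  have h := congr($(lie_pow_succ_of_lie_eq hHF hEF m) w)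
  simp only [Ring.lie_def, LinearMap.sub_apply, Module.End.mul_apply, LinearMap.add_apply,
    LinearMap.smul_apply, hw, hHs, hFw, map_zero, zero_sub] at h
  linear_combination (norm := module) -h

theorem exists_pow_apply_eq [CharZero K] {E H F : Module.End K V} (hHF : ⁅H, F⁆ = -(2 • F))
    (hEF : ⁅E, F⁆ = H) {n : ℕ} {s : V} (hFs : F s = 0) (hHs : H s = -(n : K) • s)
    (hs : ∃ y, (F ^ (n + 1)) y = s) (k : ℕ) : ∃ w, (F ^ (n + 1 + k)) w = s := by
  induction k with
  | zero => exact hs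
  | succ k ih =>
    obtain ⟨w, hw⟩ := ih
    have hc : ((n + 1 + k + 1) * (k + 1) : K) ≠ 0 := by norm_cast
    refine ⟨(-((n + 1 + k + 1) * (k + 1) : K))⁻¹ • E w, ?_⟩
    rw [← add_assoc, map_smul, pow_succ_apply_apply_eq hHF hEF hw hFs hHs]
    convert inv_smul_smul₀ (neg_ne_zero.mpr hc) s using 3
    push_cast
    ring

theorem IsSl2Triple.disjoint_ker_range [CharZero K] [IsAlgClosed K] [FiniteDimensional K V]
    {E H F : Module.End K V} (t : IsSl2Triple H E F) : Disjoint (ker E) (range F) := by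
  set W := ker E ⊓ range F
  have hW : ∀ x ∈ W, H x ∈ W := by
    rintro x ⟨hEx, y, rfl⟩
    have hHE := congr($(t.lie_h_e_nsmul) (F y))
    have hHF := congr($(t.lie_h_f_nsmul) y)
    simp only [Ring.lie_def, LinearMap.sub_apply, Module.End.mul_apply, LinearMap.smul_apply,
      LinearMap.neg_apply, mem_ker.mp hEx, map_zero, zero_sub, smul_zero] at hHE hHF
    refine ⟨mem_ker.mpr (neg_eq_zero.mp hHE), H y - 2 • y, ?_⟩
    rw [map_sub, map_nsmul]
    linear_combination (norm := module) -hHF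
  rw [disjoint_iff]
  by_contra hne
  have : Nontrivial W := Submodule.nontrivial_iff_ne_bot.mpr hne
  obtain ⟨μ, hμ⟩ := Module.End.exists_eigenvalue (H.restrict hW)
  obtain ⟨⟨x, ⟨hEx, y, rfl⟩⟩, hx⟩ := hμ.exists_hasEigenvector
  have P : t.HasPrimitiveVectorWith (F y) μ :=
    { ne_zero := fun h => hx.2 (Subtype.ext h)
      lie_h := congr(Subtype.val $(hx.apply_eq_smul))
      lie_e := mem_ker.mp hEx }
  obtain ⟨n, rfl⟩ := P.exists_nat
  have hs := P.pow_toEnd_f_ne_zero_of_eq_nat rfl le_rfl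
  have hFs := P.pow_toEnd_f_eq_zero_of_eq_nat rfl
  have hHs := P.lie_h_pow_toEnd_f n
  simp only [LieModule.toEnd_module_end, LieHom.id_apply, Module.End.lie_apply] at hs hFs hHs
  rw [pow_succ', Module.End.mul_apply] at hFs
  rw [show (n - 2 * n : K) = -n by ring] at hHs
  obtain ⟨N, hN⟩ := isNilpotent_of_lie_eq_neg_nsmul (K := K) two_ne_zero t.lie_h_f_nsmul
  obtain ⟨w, hw⟩ := exists_pow_apply_eq t.lie_h_f_nsmul t.lie_e_f hFs hHs
    ⟨y, by rw [pow_succ, Module.End.mul_apply]⟩ N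
  rw [pow_add, hN, mul_zero, LinearMap.zero_apply] at hw
  exact hs hw.symm

theorem isCompl_ker_range_of_disjoint [FiniteDimensional K V] {E F : Module.End K V}
    (hEF : Disjoint (ker E) (range F)) (hFE : Disjoint (ker F) (range E)) :
    IsCompl (ker E) (range F) := by
  refine (Submodule.isCompl_iff_disjoint _ _ ?_).mpr hEF
  have := Submodule.finrank_add_finrank_le_of_disjoint hFE
  have := LinearMap.finrank_range_add_finrank_ker E
  have := LinearMap.finrank_range_add_finrank_ker F
  omega

theorem isCompl_ker_range_of_lie_eq [CharZero K] [IsAlgClosed K] [FiniteDimensional K V]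
    {E H F : Module.End K V} (hHE : ⁅H, E⁆ = 2 • E) (hHF : ⁅H, F⁆ = -(2 • F))
    (hEF : ⁅E, F⁆ = H) : IsCompl (ker E) (range F) := by
  rcases eq_or_ne H 0 with rfl | hH
  · have h2 (X : Module.End K V) (hX : 2 • X = 0) : X = 0 := by
      rw [← Nat.cast_smul_eq_nsmul K, smul_eq_zero] at hX
      exact hX.resolve_left two_ne_zero
    have hE : E = 0 := h2 E (hHE.symm.trans (zero_lie E))
    have hF : F = 0 := h2 F (neg_eq_zero.mp (hHF.symm.trans (zero_lie F)))
    rw [hE, hF, LinearMap.ker_zero, LinearMap.range_zero]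
    exact isCompl_top_bot
  · have t : IsSl2Triple H E F := ⟨hH, hEF, hHE, hHF⟩
    exact isCompl_ker_range_of_disjoint t.disjoint_ker_range t.symm.disjoint_ker_range

end Sl2

section PairModel

variable (K : Type*) {A : Type*} [CommRing K] [Ring A] [Algebra K A]

/-- In the pair model of `q(n)`, where `(A, B)` stands for `[[A, B], [B, A]]`, `evenAd K a` is
`ad (a, 0)` and `oddAd K a` is `Π ∘ ad (0, a)`. -/
def evenAd (a : A) : Module.End K (A × A) :=
  (mulLeft K a - mulRight K a).prodMap (mulLeft K a - mulRight K a)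

def oddAd (a : A) : Module.End K (A × A) :=
  (mulLeft K a - mulRight K a).prodMap (mulLeft K a + mulRight K a)

variable {K}

theorem lie_evenAd_oddAd (a b : A) : ⁅evenAd K a, oddAd K b⁆ = oddAd K (a * b - b * a) := by
  refine LinearMap.ext fun p => Prod.ext ?_ ?_ <;>
  · simp only [evenAd, oddAd, Ring.lie_def, LinearMap.sub_apply, LinearMap.add_apply,
      Module.End.mul_apply, LinearMap.prodMap_apply, LinearMap.mulLeft_apply,
      LinearMap.mulRight_apply, Prod.mk_sub_mk]
    noncomm_ring

theorem lie_oddAd_oddAd (a b : A) : ⁅oddAd K a, oddAd K b⁆ = evenAd K (a * b - b * a) := by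
  refine LinearMap.ext fun p => Prod.ext ?_ ?_ <;>
  · simp only [evenAd, oddAd, Ring.lie_def, LinearMap.sub_apply, LinearMap.add_apply,
      Module.End.mul_apply, LinearMap.prodMap_apply, LinearMap.mulLeft_apply,
      LinearMap.mulRight_apply, Prod.mk_sub_mk]
    noncomm_ring

theorem oddAd_nsmul (m : ℕ) (a : A) : oddAd K (m • a) = m • oddAd K a := by
  refine LinearMap.ext fun p => Prod.ext ?_ ?_ <;> simp [oddAd, mul_assoc, Nat.cast_comm]

theorem oddAd_neg (a : A) : oddAd K (-a) = -oddAd K a := by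
  refine LinearMap.ext fun p => Prod.ext ?_ ?_ <;> simp [oddAd, add_comm, sub_eq_add_neg]

end PairModel

theorem coe_ker_oddAd {n : ℕ} (e : Matrix (Fin n) (Fin n) ℂ) :
    (ker (oddAd ℂ e) : Set _) = centE e := by
  ext ⟨A, B⟩
  simp [oddAd, centE, sub_eq_zero]

theorem coe_range_oddAd {n : ℕ} (f : Matrix (Fin n) (Fin n) ℂ) :
    (range (oddAd ℂ f) : Set _) = piBracketF f := by
  ext ⟨A, B⟩
  simp [oddAd, piBracketF, eq_comm]

/-- For an `sl₂`-triple `(e, h, f)`, we have `g = g^E ⊕ Π[g, F]` in the pair model of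
`q(n)`: the two subspaces intersect trivially and every pair decomposes uniquely as
a sum of an element of `U₁ = g^E` and an element of `U₂ = Π[g, F]`. -/
theorem stmt4 (n : ℕ) (e h f : Matrix (Fin n) (Fin n) ℂ)
    (h1 : h * e - e * h = 2 • e) (h2 : h * f - f * h = -(2 • f))
    (h3 : e * f - f * e = h) :
    centE e ∩ piBracketF f = {(0, 0)} ∧
    ∀ p : Matrix (Fin n) (Fin n) ℂ × Matrix (Fin n) (Fin n) ℂ,
      ∃! q : (Matrix (Fin n) (Fin n) ℂ × Matrix (Fin n) (Fin n) ℂ) ×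
             (Matrix (Fin n) (Fin n) ℂ × Matrix (Fin n) (Fin n) ℂ),
        q.1 ∈ centE e ∧ q.2 ∈ piBracketF f ∧ p = q.1 + q.2 := by
  have hc : IsCompl (ker (oddAd ℂ e)) (range (oddAd ℂ f)) :=
    isCompl_ker_range_of_lie_eq (H := evenAd ℂ h)
      (by rw [lie_evenAd_oddAd, h1, oddAd_nsmul])
      (by rw [lie_evenAd_oddAd, h2, oddAd_neg, oddAd_nsmul])
      (by rw [lie_oddAd_oddAd, h3])
  rw [← coe_ker_oddAd, ← coe_range_oddAd]
  refine ⟨by rw [← Submodule.coe_inf, hc.inf_eq_bot, Submodule.bot_coe]; rfl, fun p => ?_⟩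
  obtain ⟨u, v, huv, huniq⟩ := Submodule.existsUnique_add_of_isCompl hc p
  refine ⟨(u, v), ⟨u.2, v.2, huv.symm⟩, ?_⟩
  rintro ⟨a, b⟩ ⟨ha, hb, rfl⟩
  obtain ⟨rfl, rfl⟩ := huniq ⟨a, ha⟩ ⟨b, hb⟩ rfl
  rfl
end

section
/- Let (e,h,f) be an sl₂-triple in Matrix (Fin n) (Fin n) ℂ. Consider the subspaces of pairs V₁ := {(A,B) : f*A + A*f = 0 ∧ f*B = B*f} and V₂ := {(e*C + C*e, e*D - D*e) : C, D : Matrix (Fin n) (Fin n) ℂ}. Then V₁ ∩ V₂ = {(0,0)} and V₁ + V₂ is the whole space of pairs; i.e. every pair (A,B) of n×n complex matrices decomposes uniquely as a sum of an element of V₁ and an element of V₂. -/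
open Module LinearMap

set_option linter.unusedSectionVars false

section Sl2Abstract

variable {V : Type*} [AddCommGroup V] [Module ℂ V] [FiniteDimensional ℂ V]

lemma sl2_pow_comm (E H : Module.End ℂ V) (hHE : H * E = E * H + 2 • E) (k : ℕ) :
    H * E ^ k = E ^ k * H + (2 * k) • E ^ k := by
  induction k with
  | zero => simp
  | succ k ih =>
    rw [pow_succ, ← mul_assoc, ih, add_mul, smul_mul_assoc, mul_assoc, hHE, mul_add,
      ← mul_assoc, mul_smul_comm, ← pow_succ]
    rw [show 2 * (k + 1) = 2 * k + 2 by ring, add_smul]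
    abel

lemma sl2_nilpotent (E H : Module.End ℂ V) (hHE : H * E = E * H + 2 • E) :
    ∃ N : ℕ, E ^ N = 0 := by
  by_contra hc
  push_neg at hc
  set d := finrank ℂ (Module.End ℂ V) with hd
  have hli : LinearIndependent ℂ (fun k : Fin (d + 1) => E ^ ((k : ℕ) + 1)) := by
    apply Module.End.eigenvectors_linearIndependent'
      (LinearMap.mulLeft ℂ H - LinearMap.mulRight ℂ H)
      (fun k : Fin (d + 1) => ((2 * ((k : ℕ) + 1) : ℕ) : ℂ))
    · intro a b hab
      have : (2 * ((a : ℕ) + 1) : ℕ) = 2 * ((b : ℕ) + 1) := Nat.cast_injective hab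
      ext
      omega
    · intro k
      refine ⟨?_, hc _⟩
      rw [Module.End.mem_eigenspace_iff]
      have : (LinearMap.mulLeft ℂ H - LinearMap.mulRight ℂ H) (E ^ ((k : ℕ) + 1))
          = H * E ^ ((k : ℕ) + 1) - E ^ ((k : ℕ) + 1) * H := by
        simp [LinearMap.sub_apply]
      rw [this, sl2_pow_comm E H hHE, Nat.cast_smul_eq_nsmul]
      abel
  have := hli.fintype_card_le_finrank
  simp [hd] at this

-- pointwise versions
lemma sl2_apply_comm (E H : Module.End ℂ V) (hHE : H * E = E * H + 2 • E) (j : ℕ) (y : V) :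
    H ((E ^ j) y) = (E ^ j) (H y) + ((2 * j : ℕ) : ℂ) • (E ^ j) y := by
  have := congrArg (fun T : Module.End ℂ V => T y) (sl2_pow_comm E H hHE j)
  simp only [Module.End.mul_apply, LinearMap.add_apply, LinearMap.smul_apply] at this
  rw [Nat.cast_smul_eq_nsmul]
  exact this

lemma sl2_apply_comm1 (E H : Module.End ℂ V) (hHE : H * E = E * H + 2 • E) (y : V) :
    H (E y) = E (H y) + (2 : ℂ) • E y := by
  have := sl2_apply_comm E H hHE 1 y
  simpa using this

lemma sl2_F_pow (E H F : Module.End ℂ V) (hHE : H * E = E * H + 2 • E)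
    (hFE : F * E = E * F - H) (j : ℕ) (y : V) :
    F ((E ^ (j + 1)) y) = (E ^ (j + 1)) (F y) - ((j : ℂ) + 1) • (E ^ j) (H y)
      - (((j : ℂ) + 1) * j) • (E ^ j) y := by
  induction j generalizing y with
  | zero =>
    have := congrArg (fun T : Module.End ℂ V => T y) hFE
    simpa [Module.End.mul_apply] using this
  | succ j ih =>
    have hq : ∀ z, (E ^ j) (E z) = (E ^ (j + 1)) z := by
      intro z; rw [pow_succ]; simp [Module.End.mul_apply]
    have hp : ∀ z, (E ^ (j + 1)) (E z) = (E ^ (j + 2)) z := by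
      intro z
      calc (E ^ (j + 1)) (E z) = (E ^ (j + 1) * E) z := rfl
        _ = (E ^ (j + 2)) z := by rw [← pow_succ]
    have hstep : (E ^ (j + 2)) y = (E ^ (j + 1)) (E y) := (hp y).symm
    have hFEy : F (E y) = E (F y) - H y := by
      have := congrArg (fun T : Module.End ℂ V => T y) hFE
      simpa [Module.End.mul_apply] using this
    have hHEy : H (E y) = E (H y) + (2 : ℂ) • E y := sl2_apply_comm1 E H hHE y
    rw [hstep, ih (E y), hFEy, hHEy]
    have e1 : (E ^ (j + 1)) (E (F y) - H y) = (E ^ (j + 2)) (F y) - (E ^ (j + 1)) (H y) := by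
      rw [map_sub, hp]
    have e2 : (E ^ j) (E (H y) + (2 : ℂ) • E y) = (E ^ (j + 1)) (H y) + (2 : ℂ) • (E ^ (j + 1)) y := by
      rw [map_add, map_smul, hq, hq]
    have e3 : (E ^ j) (E y) = (E ^ (j + 1)) y := hq y
    rw [e1, e2, e3]
    push_cast
    module

lemma sl2_step (E H F : Module.End ℂ V) (hHE : H * E = E * H + 2 • E)
    (hFE : F * E = E * F - H) (j : ℕ) (x : V) (hxF : F x = 0)
    (hx : x ∈ LinearMap.range (E ^ (j + 1))) :
    H x - ((j : ℂ) + 2) • x ∈ LinearMap.range (E ^ (j + 2)) := by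
  obtain ⟨y, rfl⟩ := hx
  have hq : ∀ z, (E ^ (j + 1)) (E z) = (E ^ (j + 2)) z := by
    intro z
    calc (E ^ (j + 1)) (E z) = (E ^ (j + 1) * E) z := rfl
      _ = (E ^ (j + 2)) z := by rw [← pow_succ]
  have hq' : ∀ z, E ((E ^ j) z) = (E ^ (j + 1)) z := by
    intro z
    calc E ((E ^ j) z) = (E * E ^ j) z := rfl
      _ = (E ^ (j + 1)) z := by rw [← pow_succ']
  have hq'' : ∀ z, E ((E ^ (j + 1)) z) = (E ^ (j + 2)) z := by
    intro z
    calc E ((E ^ (j + 1)) z) = (E * E ^ (j + 1)) z := rfl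
      _ = (E ^ (j + 2)) z := by rw [← pow_succ']
  have h0 := sl2_F_pow E H F hHE hFE j y
  rw [hxF] at h0
  -- h0 : 0 = E^(j+1)(F y) - (j+1)•E^j(Hy) - (j+1)j•E^j y
  have hcomm := sl2_apply_comm E H hHE (j + 1) y
  -- goal: provide witness
  refine ⟨((j : ℂ) + 1)⁻¹ • F y, ?_⟩
  have hne : ((j : ℂ) + 1) ≠ 0 := by
    have : ((j + 1 : ℕ) : ℂ) ≠ 0 := Nat.cast_ne_zero.mpr (Nat.succ_ne_zero j)
    push_cast at this
    exact this
  apply smul_right_injective V hne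
  dsimp only
  rw [map_smul, smul_smul, mul_inv_cancel₀ hne, one_smul]
  -- LHS : (E^(j+2)) (F y); RHS : (j+1) • (H (E^(j+1) y) - (j+2) • E^(j+1) y)
  have key : ((j : ℂ) + 1) • (E ^ j) (H y)
      = (E ^ (j + 1)) (F y) - (((j : ℂ) + 1) * j) • (E ^ j) y := by
    have := h0.symm
    rw [sub_eq_zero] at this
    linear_combination (norm := module) this.symm
  have key2 : ((j : ℂ) + 1) • (E ^ (j + 1)) (H y)
      = (E ^ (j + 2)) (F y) - (((j : ℂ) + 1) * j) • (E ^ (j + 1)) y := by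
    have := congrArg E key
    rw [map_smul, map_sub, map_smul, hq', hq'', hq'] at this
    exact this
  rw [hcomm]
  push_cast
  linear_combination (norm := module) -key2

lemma sl2_eigen_neg_nat (E H F : Module.End ℂ V) (hHE : H * E = E * H + 2 • E)
    (hFE : F * E = E * F - H) (N : ℕ) (hEN : E ^ N = 0) (x : V) (hx0 : x ≠ 0)
    (hxF : F x = 0) (lam : ℂ) (hlam : H x = lam • x) :
    ∃ m : ℕ, lam = -(m : ℂ) := by
  have hFj : ∀ j : ℕ, F ((E ^ (j + 1)) x)
      = (-((j : ℂ) + 1) * (lam + j)) • ((E ^ j) x) := by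
    intro j
    rw [sl2_F_pow E H F hHE hFE j x, hxF, map_zero, hlam, map_smul]
    module
  have hex : ∃ j : ℕ, (E ^ (j + 1)) x = 0 := by
    refine ⟨N, ?_⟩
    have : (E ^ (N + 1)) = E ^ N * E := pow_succ E N
    rw [this, hEN, zero_mul]
    rfl
  classical
  obtain ⟨m, hspec, hmin⟩ : ∃ m, (E ^ (m + 1)) x = 0 ∧ ∀ k < m, (E ^ (k + 1)) x ≠ 0 :=
    ⟨Nat.find hex, Nat.find_spec hex, fun k hk => Nat.find_min hex hk⟩
  have hmne : (E ^ m) x ≠ 0 := by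
    cases m with
    | zero => simpa using hx0
    | succ k => simpa using hmin k (Nat.lt_succ_self k)
  have := hFj m
  rw [hspec, map_zero] at this
  have hc : (-((m : ℂ) + 1) * (lam + m)) = 0 := by
    rcases smul_eq_zero.mp this.symm with hc | hc
    · exact hc
    · exact absurd hc hmne
  rcases mul_eq_zero.mp hc with hc | hc
  · exfalso
    have hne2 : ((m + 1 : ℕ) : ℂ) ≠ 0 := Nat.cast_ne_zero.mpr (Nat.succ_ne_zero m)
    apply hne2
    push_cast
    linear_combination -hc
  · exact ⟨m, by linear_combination hc⟩

lemma sl2_inf_eq_bot (E H F : Module.End ℂ V) (hHE : H * E = E * H + 2 • E)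
    (hFH : F * H = H * F + 2 • F) (hFE : F * E = E * F - H) :
    LinearMap.ker F ⊓ LinearMap.range E = ⊥ := by
  obtain ⟨N, hEN⟩ := sl2_nilpotent E H hHE
  by_contra hne
  set W : Submodule ℂ V := LinearMap.ker F ⊓ LinearMap.range E with hW
  have hFH' : ∀ x : V, F x = 0 → F (H x) = 0 := by
    intro x hx
    have := congrArg (fun T : Module.End ℂ V => T x) hFH
    simp only [Module.End.mul_apply, LinearMap.add_apply, LinearMap.smul_apply] at this
    rw [this, hx]
    simp
  have hWinv : ∀ x ∈ W, H x ∈ W := by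
    intro x hx
    obtain ⟨hx1, hx2⟩ := Submodule.mem_inf.mp hx
    rw [LinearMap.mem_ker] at hx1
    have hx2' : x ∈ LinearMap.range (E ^ (0 + 1)) := by simpa using hx2
    have hstep := sl2_step E H F hHE hFE 0 x hx1 hx2'
    refine Submodule.mem_inf.mpr ⟨LinearMap.mem_ker.mpr (hFH' x hx1), ?_⟩
    have h2 : H x - (((0 : ℕ) : ℂ) + 2) • x ∈ LinearMap.range E := by
      obtain ⟨z, hz⟩ := hstep
      refine ⟨E ((E ^ (0 : ℕ)) z), ?_⟩
      rw [← hz]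
      calc E (E ((E ^ (0 : ℕ)) z)) = (E * (E * E ^ (0 : ℕ))) z := rfl
        _ = (E ^ (0 + 2)) z := by rw [← pow_succ', ← pow_succ']
    have hrw : H x = (H x - (((0 : ℕ) : ℂ) + 2) • x) + (((0 : ℕ) : ℂ) + 2) • x := by abel
    rw [hrw]
    exact Submodule.add_mem _ h2 (Submodule.smul_mem _ _ hx2)
  haveI : Nontrivial W := Submodule.nontrivial_iff_ne_bot.mpr hne
  obtain ⟨lam, hlam⟩ := Module.End.exists_eigenvalue (H.restrict hWinv)
  obtain ⟨v, hv⟩ := hlam.exists_hasEigenvector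
  have hxW : (v : V) ∈ W := v.2
  have hx0 : (v : V) ≠ 0 := fun hcon => hv.right (Subtype.ext hcon)
  have hHx : H (v : V) = lam • (v : V) := by
    have h' := hv.apply_eq_smul
    have := congrArg (Subtype.val) h'
    simpa [LinearMap.restrict_coe_apply] using this
  have hxF : F (v : V) = 0 := LinearMap.mem_ker.mp (Submodule.mem_inf.mp hxW).1
  obtain ⟨m, hm⟩ := sl2_eigen_neg_nat E H F hHE hFE N hEN (v : V) hx0 hxF lam hHx
  have key : ∀ k : ℕ, (v : V) ∈ LinearMap.range (E ^ (k + 1)) := by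
    intro k
    induction k with
    | zero => simpa using (Submodule.mem_inf.mp hxW).2
    | succ k ih =>
      have hstep := sl2_step E H F hHE hFE k (v : V) hxF ih
      rw [hHx, hm] at hstep
      have hco : (-(m : ℂ) - ((k : ℂ) + 2)) ≠ 0 := by
        have : ((m + k + 2 : ℕ) : ℂ) ≠ 0 := Nat.cast_ne_zero.mpr (by omega)
        intro hcon
        apply this
        push_cast
        linear_combination -hcon
      have hmem : (-(m : ℂ) - ((k : ℂ) + 2)) • (v : V) ∈ LinearMap.range (E ^ (k + 2)) := by
        have : (-(m : ℂ)) • (v : V) - ((k : ℂ) + 2) • (v : V)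
            = (-(m : ℂ) - ((k : ℂ) + 2)) • (v : V) := by module
        rwa [this] at hstep
      have := Submodule.smul_mem _ (-(m : ℂ) - ((k : ℂ) + 2))⁻¹ hmem
      rwa [smul_smul, inv_mul_cancel₀ hco, one_smul] at this
  have hfin := key N
  have hz : E ^ (N + 1) = 0 := by rw [pow_succ, hEN, zero_mul]
  rw [hz] at hfin
  obtain ⟨y, hy⟩ := hfin
  exact hx0 (by simpa using hy.symm)

lemma sl2_isCompl (E H F : Module.End ℂ V) (hHE : H * E = E * H + 2 • E)
    (hFH : F * H = H * F + 2 • F) (hFE : F * E = E * F - H) :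
    IsCompl (LinearMap.ker F) (LinearMap.range E) := by
  have hinf := sl2_inf_eq_bot E H F hHE hFH hFE
  have hinf2 : LinearMap.ker E ⊓ LinearMap.range F = ⊥ := by
    apply sl2_inf_eq_bot F (-H) E
    · rw [neg_mul, mul_neg, hFH]; abel
    · rw [mul_neg, neg_mul, hHE]; abel
    · rw [hFE]; abel
  have r1 := LinearMap.finrank_range_add_finrank_ker E
  have r2 := LinearMap.finrank_range_add_finrank_ker F
  have s1 := Submodule.finrank_sup_add_finrank_inf_eq (LinearMap.ker F) (LinearMap.range E)
  have s2 := Submodule.finrank_sup_add_finrank_inf_eq (LinearMap.ker E) (LinearMap.range F)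
  rw [hinf, finrank_bot, add_zero] at s1
  rw [hinf2, finrank_bot, add_zero] at s2
  have t1 : finrank ℂ ↥(LinearMap.ker F ⊔ LinearMap.range E) ≤ finrank ℂ V :=
    Submodule.finrank_le _
  have t2 : finrank ℂ ↥(LinearMap.ker E ⊔ LinearMap.range F) ≤ finrank ℂ V :=
    Submodule.finrank_le _
  have htop : LinearMap.ker F ⊔ LinearMap.range E = ⊤ := by
    apply Submodule.eq_top_of_finrank_eq
    omega
  exact ⟨disjoint_iff.mpr hinf, codisjoint_iff.mpr htop⟩

end Sl2Abstract

section Sl2Matrix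

variable {n : ℕ}

noncomputable def opP (a : Matrix (Fin n) (Fin n) ℂ) :
    Module.End ℂ (Matrix (Fin n) (Fin n) ℂ) :=
  LinearMap.mulLeft ℂ a + LinearMap.mulRight ℂ a

noncomputable def opM (a : Matrix (Fin n) (Fin n) ℂ) :
    Module.End ℂ (Matrix (Fin n) (Fin n) ℂ) :=
  LinearMap.mulLeft ℂ a - LinearMap.mulRight ℂ a

@[simp] lemma opP_apply (a X : Matrix (Fin n) (Fin n) ℂ) : opP a X = a * X + X * a := rfl
@[simp] lemma opM_apply (a X : Matrix (Fin n) (Fin n) ℂ) : opM a X = a * X - X * a := rfl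

lemma relPP (e h : Matrix (Fin n) (Fin n) ℂ) (hz : h * e - e * h - 2 • e = 0) :
    opM h * opP e = opP e * opM h + 2 • opP e := by
  apply LinearMap.ext; intro X
  simp only [Module.End.mul_apply, LinearMap.add_apply, LinearMap.smul_apply,
    opP_apply, opM_apply]
  rw [← sub_eq_zero,
    show (h * (e * X + X * e) - (e * X + X * e) * h)
        - ((e * (h * X - X * h) + (h * X - X * h) * e) + 2 • (e * X + X * e))
      = (h * e - e * h - 2 • e) * X + X * (h * e - e * h - 2 • e) from by noncomm_ring,
    hz]
  simp

lemma relFH1 (f h : Matrix (Fin n) (Fin n) ℂ) (hz : f * h - h * f - 2 • f = 0) :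
    opP f * opM h = opM h * opP f + 2 • opP f := by
  apply LinearMap.ext; intro X
  simp only [Module.End.mul_apply, LinearMap.add_apply, LinearMap.smul_apply,
    opP_apply, opM_apply]
  rw [← sub_eq_zero,
    show (f * (h * X - X * h) + (h * X - X * h) * f)
        - ((h * (f * X + X * f) - (f * X + X * f) * h) + 2 • (f * X + X * f))
      = (f * h - h * f - 2 • f) * X + X * (f * h - h * f - 2 • f) from by noncomm_ring,
    hz]
  simp

lemma relFE1 (e f h : Matrix (Fin n) (Fin n) ℂ) (hz : e * f - f * e - h = 0) :
    opP f * opP e = opP e * opP f - opM h := by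
  apply LinearMap.ext; intro X
  simp only [Module.End.mul_apply, LinearMap.add_apply, LinearMap.sub_apply,
    opP_apply, opM_apply]
  rw [← sub_eq_zero,
    show (f * (e * X + X * e) + (e * X + X * e) * f)
        - ((e * (f * X + X * f) + (f * X + X * f) * e) - (h * X - X * h))
      = X * (e * f - f * e - h) - (e * f - f * e - h) * X from by noncomm_ring,
    hz]
  simp

lemma relMM (e h : Matrix (Fin n) (Fin n) ℂ) (hz : h * e - e * h - 2 • e = 0) :
    opM h * opM e = opM e * opM h + 2 • opM e := by
  apply LinearMap.ext; intro X
  simp only [Module.End.mul_apply, LinearMap.add_apply, LinearMap.smul_apply,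
    opM_apply]
  rw [← sub_eq_zero,
    show (h * (e * X - X * e) - (e * X - X * e) * h)
        - ((e * (h * X - X * h) - (h * X - X * h) * e) + 2 • (e * X - X * e))
      = (h * e - e * h - 2 • e) * X - X * (h * e - e * h - 2 • e) from by noncomm_ring,
    hz]
  simp

lemma relFH2 (f h : Matrix (Fin n) (Fin n) ℂ) (hz : f * h - h * f - 2 • f = 0) :
    opM f * opM h = opM h * opM f + 2 • opM f := by
  apply LinearMap.ext; intro X
  simp only [Module.End.mul_apply, LinearMap.add_apply, LinearMap.smul_apply,
    opM_apply]
  rw [← sub_eq_zero,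
    show (f * (h * X - X * h) - (h * X - X * h) * f)
        - ((h * (f * X - X * f) - (f * X - X * f) * h) + 2 • (f * X - X * f))
      = (f * h - h * f - 2 • f) * X - X * (f * h - h * f - 2 • f) from by noncomm_ring,
    hz]
  simp

lemma relFE2 (e f h : Matrix (Fin n) (Fin n) ℂ) (hz : e * f - f * e - h = 0) :
    opM f * opM e = opM e * opM f - opM h := by
  apply LinearMap.ext; intro X
  simp only [Module.End.mul_apply, LinearMap.sub_apply, opM_apply]
  rw [← sub_eq_zero,
    show (f * (e * X - X * e) - (e * X - X * e) * f)
        - ((e * (f * X - X * f) - (f * X - X * f) * e) - (h * X - X * h))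
      = X * (e * f - f * e - h) - (e * f - f * e - h) * X from by noncomm_ring,
    hz]
  simp

lemma unique_decomp {M : Type*} [AddCommGroup M] [Module ℂ M] {K R : Submodule ℂ M}
    (hinf : K ⊓ R = ⊥) {a a' b b' : M} (ha : a ∈ K) (ha' : a' ∈ K) (hb : b ∈ R) (hb' : b' ∈ R)
    (hsum : a + b = a' + b') : a = a' ∧ b = b' := by
  have hk : a - a' ∈ K := K.sub_mem ha ha'
  have h' : a - a' = b' - b := by
    rw [sub_eq_sub_iff_add_eq_add, hsum]
    abel
  have hr : a - a' ∈ R := by rw [h']; exact R.sub_mem hb' hb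
  have hmem : a - a' ∈ K ⊓ R := Submodule.mem_inf.mpr ⟨hk, hr⟩
  rw [hinf] at hmem
  have h0 : a = a' := by
    have := (Submodule.mem_bot ℂ).mp hmem
    rwa [sub_eq_zero] at this
  refine ⟨h0, ?_⟩
  subst h0
  exact add_left_cancel hsum

end Sl2Matrix



/-- The subspace `Π g^F` in the pair model of the queer Lie superalgebra `q(n)`,
where `F = (0, f)` and `Π` is the parity flip: pairs `(A, B)` with `f*A + A*f = 0`
and `f*B = B*f`. -/
def piCentF {n : ℕ} (f : Matrix (Fin n) (Fin n) ℂ) :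
    Set (Matrix (Fin n) (Fin n) ℂ × Matrix (Fin n) (Fin n) ℂ) :=
  {p | f * p.1 + p.1 * f = 0 ∧ f * p.2 = p.2 * f}

/-- The subspace `[g, E]` in the pair model of `q(n)`, where `E = (0, e)`:
pairs of the form `(e*C + C*e, e*D - D*e)`. -/
def bracketE {n : ℕ} (e : Matrix (Fin n) (Fin n) ℂ) :
    Set (Matrix (Fin n) (Fin n) ℂ × Matrix (Fin n) (Fin n) ℂ) :=
  {p | ∃ C D : Matrix (Fin n) (Fin n) ℂ, p = (e * C + C * e, e * D - D * e)}

/-- For an `sl₂`-triple `(e, h, f)`, we have `g = Π g^F ⊕ [g, E]` in the pair model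
of `q(n)`: the two subspaces intersect trivially and every pair decomposes uniquely
as a sum of an element of `V₁ = Π g^F` and an element of `V₂ = [g, E]`. -/
theorem stmt5 (n : ℕ) (e h f : Matrix (Fin n) (Fin n) ℂ)
    (h1 : h * e - e * h = 2 • e) (h2 : h * f - f * h = -(2 • f))
    (h3 : e * f - f * e = h) :
    piCentF f ∩ bracketE e = {(0, 0)} ∧
    ∀ p : Matrix (Fin n) (Fin n) ℂ × Matrix (Fin n) (Fin n) ℂ,
      ∃! q : (Matrix (Fin n) (Fin n) ℂ × Matrix (Fin n) (Fin n) ℂ) ×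
             (Matrix (Fin n) (Fin n) ℂ × Matrix (Fin n) (Fin n) ℂ),
        q.1 ∈ piCentF f ∧ q.2 ∈ bracketE e ∧ p = q.1 + q.2 := by
  have hz1 : h * e - e * h - 2 • e = 0 := by rw [h1]; simp
  have hz2 : f * h - h * f - 2 • f = 0 := by
    have hfh : f * h - h * f = 2 • f := by
      have := congrArg Neg.neg h2
      simpa [neg_sub] using this
    rw [hfh]; simp
  have hz3 : e * f - f * e - h = 0 := by rw [h3]; simp
  have c1 : IsCompl (LinearMap.ker (opP f)) (LinearMap.range (opP e)) :=
    sl2_isCompl (opP e) (opM h) (opP f) (relPP e h hz1) (relFH1 f h hz2) (relFE1 e f h hz3)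
  have c2 : IsCompl (LinearMap.ker (opM f)) (LinearMap.range (opM e)) :=
    sl2_isCompl (opM e) (opM h) (opM f) (relMM e h hz1) (relFH2 f h hz2) (relFE2 e f h hz3)
  have i1 : LinearMap.ker (opP f) ⊓ LinearMap.range (opP e) = ⊥ := c1.inf_eq_bot
  have i2 : LinearMap.ker (opM f) ⊓ LinearMap.range (opM e) = ⊥ := c2.inf_eq_bot
  constructor
  · ext p
    obtain ⟨A, B⟩ := p
    simp only [Set.mem_inter_iff, Set.mem_singleton_iff, piCentF, bracketE,
      Set.mem_setOf_eq, Prod.ext_iff, Prod.mk.injEq]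
    constructor
    · rintro ⟨⟨hA1, hB1⟩, C, D, hAC, hBD⟩
      have hAmem : A ∈ LinearMap.ker (opP f) ⊓ LinearMap.range (opP e) :=
        Submodule.mem_inf.mpr ⟨LinearMap.mem_ker.mpr (by simpa using hA1),
          ⟨C, (opP_apply e C).trans hAC.symm⟩⟩
      have hBmem : B ∈ LinearMap.ker (opM f) ⊓ LinearMap.range (opM e) :=
        Submodule.mem_inf.mpr ⟨LinearMap.mem_ker.mpr (by simp [sub_eq_zero, hB1]),
          ⟨D, (opM_apply e D).trans hBD.symm⟩⟩
      rw [i1] at hAmem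
      rw [i2] at hBmem
      exact ⟨(Submodule.mem_bot ℂ).mp hAmem, (Submodule.mem_bot ℂ).mp hBmem⟩
    · rintro ⟨rfl, rfl⟩
      exact ⟨⟨by simp, by simp⟩, 0, 0, by simp, by simp⟩
  · rintro ⟨A, B⟩
    have hAtop : A ∈ LinearMap.ker (opP f) ⊔ LinearMap.range (opP e) := by
      rw [c1.sup_eq_top]; trivial
    have hBtop : B ∈ LinearMap.ker (opM f) ⊔ LinearMap.range (opM e) := by
      rw [c2.sup_eq_top]; trivial
    obtain ⟨A1, hA1, A2, hA2, hAsum⟩ := Submodule.mem_sup.mp hAtop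
    obtain ⟨B1, hB1, B2, hB2, hBsum⟩ := Submodule.mem_sup.mp hBtop
    have hA2r := hA2
    have hB2r := hB2
    obtain ⟨C, hC⟩ := hA2r
    obtain ⟨D, hD⟩ := hB2r
    refine ⟨((A1, B1), (A2, B2)), ⟨⟨?_, ?_⟩, ⟨C, D, ?_⟩, ?_⟩, ?_⟩
    · simpa using LinearMap.mem_ker.mp hA1
    · have := LinearMap.mem_ker.mp hB1
      simp only [opM_apply] at this
      rwa [sub_eq_zero] at this
    · exact Prod.ext (by simpa using hC.symm) (by simpa using hD.symm)
    · exact Prod.ext hAsum.symm hBsum.symm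
    · rintro ⟨⟨A1', B1'⟩, ⟨A2', B2'⟩⟩ ⟨⟨hpa, hpb⟩, ⟨C', D', hcd⟩, hsum⟩
      simp only [Prod.ext_iff, Prod.mk.injEq, Prod.mk_add_mk] at hcd hsum
      simp only at hpa hpb
      have hA2'mem : A2' ∈ LinearMap.range (opP e) := ⟨C', (opP_apply e C').trans hcd.1.symm⟩
      have hB2'mem : B2' ∈ LinearMap.range (opM e) := ⟨D', (opM_apply e D').trans hcd.2.symm⟩
      have hA1'mem : A1' ∈ LinearMap.ker (opP f) := LinearMap.mem_ker.mpr (by simpa using hpa)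
      have hB1'mem : B1' ∈ LinearMap.ker (opM f) :=
        LinearMap.mem_ker.mpr (by simp [sub_eq_zero, hpb])
      have hAsum' : A1' + A2' = A1 + A2 := by rw [hAsum, ← hsum.1]
      have hBsum' : B1' + B2' = B1 + B2 := by rw [hBsum, ← hsum.2]
      obtain ⟨ea1, ea2⟩ := unique_decomp i1 hA1'mem hA1 hA2'mem hA2 hAsum'
      obtain ⟨eb1, eb2⟩ := unique_decomp i2 hB1'mem hB1 hB2'mem hB2 hBsum'
      exact Prod.ext (Prod.ext ea1 eb1) (Prod.ext ea2 eb2)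
end

section
/- Let (e,h,f) be an sl₂-triple in Matrix (Fin n) (Fin n) ℂ and let U₂ := {(f*C - C*f, f*D + D*f) : C, D : Matrix (Fin n) (Fin n) ℂ} be the subspace of pairs representing Π[g,F]. Define the bilinear form ω_χ((A,B),(A',B')) := Matrix.trace (e * (A*A' - A'*A + B*B' + B'*B)). Then ω_χ restricted to U₂ is non-degenerate: if (A,B) ∈ U₂ and ω_χ((A,B),(A',B')) = 0 for all (A',B') ∈ U₂, then A = 0 and B = 0. -/
/-- The bilinear form `ω_χ(x, y) = χ([x, y])` on the pair model of `q(n)`, where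
`χ(A, B) = trace (e*A)`. -/
noncomputable def omegaChi {n : ℕ} (e : Matrix (Fin n) (Fin n) ℂ)
    (x y : Matrix (Fin n) (Fin n) ℂ × Matrix (Fin n) (Fin n) ℂ) : ℂ :=
  Matrix.trace (e * (x.1 * y.1 - y.1 * x.1 + x.2 * y.2 + y.2 * x.2))

/-!
For `p = ([f, C], {f, D}) ∈ Π[g, F]` the cyclicity of the trace gives
`ω_χ(p, ([f, X], {f, Y})) = tr ({f, {e, {f, D}}} Y) - tr ([f, [e, [f, C]]] X)`, so non-degeneracy
amounts to `ker (F E F) = ker F` for the two sl₂-triples `(ad h, ad e, ad f)` and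
`(ad h, {e, ·}, {f, ·})` of endomorphisms of the matrix space. This follows from
`ker E ∩ range F = 0` for the triple and for `(-H, F, E)`.

To see `ker E ∩ range F = 0` in a finite-dimensional sl₂-module, note that this intersection is
`H`-stable and take an `H`-eigenvector `v = F w ≠ 0` in it. Its eigenvalue is a natural number `m`, and `w` may be chosen in the
generalized `(m + 2)`-eigenspace of `H`. From `E^(k+1) F = F E^(k+1) + (k+1) (H - k) E^k` and
`E F w = 0`, the vanishing of `E^(k+1) w` forces `(H - k) E^k w = 0`; since `E^k w` lies in the
generalized `(m + 2 + 2k)`-eigenspace and `m + 2 + 2k ≠ k`, `E^k w = 0`. As `E` is nilpotent on `w`, descending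
induction gives `w = 0`.
-/

open Module Set LieAlgebra

attribute [local instance 100] LieRing.ofAssociativeRing

namespace Module.End

section CommRing

variable {R M : Type*} [CommRing R] [AddCommGroup M] [Module R M] {H T : End R M}

lemma mapsTo_maxGenEigenspace_of_lie_eq_smul {c : R} (hT : ⁅H, T⁆ = c • T) (μ : R) :
    MapsTo T (H.maxGenEigenspace μ) (H.maxGenEigenspace (μ + c)) := by
  have hsemi : SemiconjBy T (H - μ • 1) (H - (μ + c) • 1) := by
    rw [Ring.lie_def] at hT
    simp only [SemiconjBy, mul_sub, sub_mul, add_smul, add_mul, mul_smul_comm, smul_mul_assoc,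
      mul_one, one_mul]
    linear_combination (norm := module) -hT
  intro x hx
  obtain ⟨k, hk⟩ := (mem_maxGenEigenspace _ _ _).mp hx
  exact (mem_maxGenEigenspace _ _ _).mpr
    ⟨k, by rw [← mul_apply, ← (hsemi.pow_right k).eq, mul_apply, hk, map_zero]⟩

lemma pow_apply_mem_maxGenEigenspace {c : R}
    (hT : ∀ ν, MapsTo T (H.maxGenEigenspace ν) (H.maxGenEigenspace (ν + c)))
    {μ : R} {w : M} (hw : w ∈ H.maxGenEigenspace μ) (k : ℕ) :
    (T ^ k) w ∈ H.maxGenEigenspace (μ + k * c) := by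
  induction k with
  | zero => simpa using hw
  | succ k ih =>
    rw [pow_succ', mul_apply, Nat.cast_succ, add_one_mul, ← add_assoc]
    exact hT _ ih

end CommRing

variable {K V : Type*} [Field K] [AddCommGroup V] [Module K V] [FiniteDimensional K V]
  {H T : End K V}

lemma exists_pow_apply_eq_zero [CharZero K] {c : K}
    (hT : ∀ ν, MapsTo T (H.maxGenEigenspace ν) (H.maxGenEigenspace (ν + c))) (hc : c ≠ 0)
    {μ : K} {w : V} (hw : w ∈ H.maxGenEigenspace μ) : ∃ N : ℕ, (T ^ N) w = 0 := by
  by_contra! hne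
  refine Set.infinite_of_injective_forall_mem (f := fun k : ℕ => μ + k * c) ?_
    (fun k => (Submodule.ne_bot_iff _).mpr ⟨_, pow_apply_mem_maxGenEigenspace hT hw k, hne k⟩)
    (WellFoundedGT.finite_ne_bot_of_iSupIndep H.independent_maxGenEigenspace)
  intro a b hab
  simpa [hc] using hab

lemma exists_mem_maxGenEigenspace_apply_eq [IsAlgClosed K] {c : K}
    (hT : ∀ ν, MapsTo T (H.maxGenEigenspace ν) (H.maxGenEigenspace (ν + c))) {μ : K} {w : V}
    (hw : T w ∈ H.maxGenEigenspace (μ + c)) : ∃ w' ∈ H.maxGenEigenspace μ, T w' = T w := by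
  have hmem : w ∈ H.maxGenEigenspace μ ⊔ ⨆ (ν) (_ : ν ≠ μ), H.maxGenEigenspace ν := by
    rw [← iSup_split_single, iSup_maxGenEigenspace_eq_top]
    trivial
  obtain ⟨w₁, hw₁, w₂, hw₂, rfl⟩ := Submodule.mem_sup.mp hmem
  have hmap : (⨆ (ν) (_ : ν ≠ μ), H.maxGenEigenspace ν).map T ≤
      ⨆ (ν) (_ : ν ≠ μ + c), H.maxGenEigenspace ν := by
    simp only [Submodule.map_iSup]
    refine iSup₂_le fun ν hν => le_iSup₂_of_le (ν + c) (by simpa using hν) ?_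
    exact Submodule.map_le_iff_le_comap.mpr fun x hx => hT ν hx
  have hTw₂ : T w₂ = 0 := by
    refine Submodule.disjoint_def.mp (H.independent_maxGenEigenspace (μ + c)) _ ?_
      (hmap ⟨w₂, hw₂, rfl⟩)
    simpa using sub_mem hw (hT μ hw₁)
  exact ⟨w₁, hw₁, by rw [map_add, hTw₂, add_zero]⟩

lemma exists_eigenvector_mem_of_mapsTo [IsAlgClosed K] {p : Submodule K V} (hp : p ≠ ⊥)
    (hH : MapsTo H p p) : ∃ μ : K, ∃ v ∈ p, v ≠ 0 ∧ H v = μ • v := by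
  have : Nontrivial p := Submodule.nontrivial_iff_ne_bot.mpr hp
  obtain ⟨μ, hμ⟩ := exists_eigenvalue (H.restrict hH)
  obtain ⟨⟨v, hvp⟩, hv, hv0⟩ := hμ.exists_hasEigenvector
  exact ⟨μ, v, hvp, by simpa using hv0, congrArg Subtype.val (mem_eigenspace_iff.mp hv)⟩

end Module.End

namespace IsSl2Triple

section Module

variable {K V : Type*} [Field K] [AddCommGroup V] [Module K V] {h e f : End K V}

lemma e_pow_succ_mul_f (t : IsSl2Triple h e f) (k : ℕ) :
    e ^ (k + 1) * f = f * e ^ (k + 1) + ((k : K) + 1) • ((h - (k : K) • 1) * e ^ k) := by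
  have hef : e * f = f * e + h := by rw [← t.lie_e_f, Ring.lie_def]; abel
  have heh : e * h = h * e - (2 : K) • e := by rw [← t.lie_h_e_smul K, Ring.lie_def]; abel
  induction k with
  | zero => simpa using hef
  | succ k ih =>
    rw [pow_succ' e (k + 1), mul_assoc, ih]
    simp only [pow_succ', mul_add, mul_smul_comm, mul_sub, sub_mul, smul_mul_assoc, one_mul,
      ← mul_assoc, hef, heh, add_mul, Nat.cast_succ]
    module

lemma mapsTo_e (t : IsSl2Triple h e f) (μ : K) :
    MapsTo e (h.maxGenEigenspace μ) (h.maxGenEigenspace (μ + 2)) :=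
  End.mapsTo_maxGenEigenspace_of_lie_eq_smul (t.lie_h_e_smul K) μ

lemma mapsTo_f (t : IsSl2Triple h e f) (μ : K) :
    MapsTo f (h.maxGenEigenspace μ) (h.maxGenEigenspace (μ + -2)) :=
  End.mapsTo_maxGenEigenspace_of_lie_eq_smul (by rw [t.lie_lie_smul_f K, neg_smul]) μ

lemma pow_apply_eq_zero_of_pow_succ_apply_eq_zero [CharZero K] (t : IsSl2Triple h e f)
    {ν : K} {w : V} (hw : w ∈ h.maxGenEigenspace ν) (hefw : e (f w) = 0) {k : ℕ}
    (hk : ν + k ≠ 0) (hsucc : (e ^ (k + 1)) w = 0) : (e ^ k) w = 0 := by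
  have heig : (e ^ k) w ∈ h.eigenspace (k : K) := by
    have := LinearMap.congr_fun (t.e_pow_succ_mul_f k) w
    rw [LinearMap.add_apply, End.mul_apply, End.mul_apply, hsucc, map_zero, zero_add, pow_succ,
      End.mul_apply, hefw, map_zero, eq_comm, LinearMap.smul_apply, smul_eq_zero] at this
    have := this.resolve_left (by exact_mod_cast k.succ_ne_zero)
    rwa [End.mul_apply, LinearMap.sub_apply, sub_eq_zero, LinearMap.smul_apply, End.one_apply,
      ← End.mem_eigenspace_iff] at this
  have hgen := End.pow_apply_mem_maxGenEigenspace t.mapsTo_e hw k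
  refine Submodule.disjoint_def.mp (h.disjoint_genEigenspace ?_ 1 ⊤) _ heig hgen
  contrapose! hk
  linear_combination -hk

lemma eq_zero_of_apply_apply_eq_zero [CharZero K] [FiniteDimensional K V]
    (t : IsSl2Triple h e f) {ν : K} {w : V} (hw : w ∈ h.maxGenEigenspace ν)
    (hefw : e (f w) = 0) (hν : ∀ k : ℕ, ν + k ≠ 0) : w = 0 := by
  obtain ⟨N, hN⟩ := End.exists_pow_apply_eq_zero t.mapsTo_e two_ne_zero hw
  induction N with
  | zero => simpa using hN
  | succ N ih => exact ih (t.pow_apply_eq_zero_of_pow_succ_apply_eq_zero hw hefw (hν N) hN)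

variable [CharZero K] [IsAlgClosed K] [FiniteDimensional K V]

theorem disjoint_ker_range_s6 (t : IsSl2Triple h e f) :
    Disjoint (LinearMap.ker e) (LinearMap.range f) := by
  have heh : e * h = h * e - (2 : K) • e := by rw [← t.lie_h_e_smul K, Ring.lie_def]; abel
  have hhf : h * f = f * (h - (2 : K) • 1) := by
    have := t.lie_lie_smul_f K
    rw [Ring.lie_def] at this
    rw [mul_sub, mul_smul_comm, mul_one]
    linear_combination (norm := module) this
  have hmaps : MapsTo h (LinearMap.ker e ⊓ LinearMap.range f)
      (LinearMap.ker e ⊓ LinearMap.range f) := by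
    rintro _ ⟨hx, y, rfl⟩
    refine ⟨?_, _, (LinearMap.congr_fun hhf y).symm⟩
    change e (h (f y)) = 0
    rw [← End.mul_apply, heh, LinearMap.sub_apply, End.mul_apply, LinearMap.smul_apply, hx,
      map_zero, smul_zero, sub_zero]
  rw [disjoint_iff]
  by_contra hne
  obtain ⟨μ, v, ⟨hev, w, rfl⟩, hv0, hhv⟩ := End.exists_eigenvector_mem_of_mapsTo hne hmaps
  obtain ⟨m, rfl⟩ := (HasPrimitiveVectorWith.mk (t := t) hv0 hhv hev).exists_nat
  obtain ⟨w', hw', hfw'⟩ := End.exists_mem_maxGenEigenspace_apply_eq t.mapsTo_f (μ := m + 2)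
    (w := w) (by simpa using End.eigenspace_le_maxGenEigenspace (End.mem_eigenspace_iff.mpr hhv))
  have := t.eq_zero_of_apply_apply_eq_zero hw' (by rwa [hfw']) fun k => by norm_cast; omega
  exact hv0 (by rw [← hfw', this, map_zero])

theorem ker_f_mul_e_mul_f (t : IsSl2Triple h e f) :
    LinearMap.ker (f * e * f) = LinearMap.ker f := by
  refine le_antisymm (fun w hw => ?_) fun w hw => by simp [show f w = 0 from hw]
  have hefw : e (f w) = 0 :=
    Submodule.disjoint_def.mp t.symm.disjoint_ker_range_s6 _ hw ⟨f w, rfl⟩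
  exact Submodule.disjoint_def.mp t.disjoint_ker_range_s6 _ hefw ⟨w, rfl⟩

end Module

end IsSl2Triple

section Anticommutator

variable (K : Type*) {A : Type*} [Field K] [Ring A] [Algebra K A]

noncomputable def anticommutatorMap : A →ₗ[K] Module.End K A :=
  LinearMap.mul K A + (LinearMap.mul K A).flip

variable {K}

@[simp] lemma anticommutatorMap_apply (a x : A) : anticommutatorMap K a x = a * x + x * a := rfl

lemma lie_ad_anticommutatorMap (x y : A) :
    ⁅ad K A x, anticommutatorMap K y⁆ = anticommutatorMap K ⁅x, y⁆ := by
  ext z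
  simp only [Ring.lie_def, LinearMap.sub_apply, End.mul_apply, ad_apply, anticommutatorMap_apply]
  noncomm_ring

lemma lie_anticommutatorMap (x y : A) :
    ⁅anticommutatorMap K x, anticommutatorMap K y⁆ = ad K A ⁅x, y⁆ := by
  ext z
  simp only [Ring.lie_def, LinearMap.sub_apply, End.mul_apply, ad_apply, anticommutatorMap_apply]
  noncomm_ring

end Anticommutator

namespace IsSl2Triple

variable {K : Type*} [Field K] [CharZero K]

lemma ad_ne_zero {L : Type*} [LieRing L] [LieAlgebra K L] {h e f : L} (t : IsSl2Triple h e f) :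
    ad K L h ≠ 0 := by
  intro h0
  apply t.e_ne_zero
  have : ⁅h, e⁆ = 0 := by rw [← ad_apply K, h0, LinearMap.zero_apply]
  rw [t.lie_h_e_smul K] at this
  exact (smul_eq_zero.mp this).resolve_left two_ne_zero

theorem isSl2Triple_ad {L : Type*} [LieRing L] [LieAlgebra K L] {h e f : L}
    (t : IsSl2Triple h e f) : IsSl2Triple (ad K L h) (ad K L e) (ad K L f) where
  h_ne_zero := t.ad_ne_zero
  lie_e_f := by rw [← LieHom.map_lie, t.lie_e_f]
  lie_h_e_nsmul := by rw [← LieHom.map_lie, t.lie_h_e_nsmul, map_nsmul]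
  lie_h_f_nsmul := by rw [← LieHom.map_lie, t.lie_h_f_nsmul, map_neg, map_nsmul]

theorem isSl2Triple_anticommutatorMap {A : Type*} [Ring A] [Algebra K A] {h e f : A}
    (t : IsSl2Triple h e f) :
    IsSl2Triple (ad K A h) (anticommutatorMap K e) (anticommutatorMap K f) where
  h_ne_zero := t.ad_ne_zero
  lie_e_f := by rw [lie_anticommutatorMap, t.lie_e_f]
  lie_h_e_nsmul := by rw [lie_ad_anticommutatorMap, t.lie_h_e_nsmul, map_nsmul]
  lie_h_f_nsmul := by rw [lie_ad_anticommutatorMap, t.lie_h_f_nsmul, map_neg, map_nsmul]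

end IsSl2Triple

namespace Matrix

variable {n R : Type*} [Fintype n] [CommRing R]

lemma trace_mul_commutator (a b c : Matrix n n R) :
    trace (a * (b * c - c * b)) = trace ((a * b - b * a) * c) := by
  rw [mul_sub, sub_mul, trace_sub, trace_sub, ← mul_assoc, ← mul_assoc, trace_mul_cycle a c b]

lemma trace_mul_anticommutator (a b c : Matrix n n R) :
    trace (a * (b * c + c * b)) = trace ((a * b + b * a) * c) := by
  rw [mul_add, add_mul, trace_add, trace_add, ← mul_assoc, ← mul_assoc, trace_mul_cycle a c b]

end Matrix

lemma omegaChi_eq_trace_sub_trace {n : ℕ} (e f A B X Y : Matrix (Fin n) (Fin n) ℂ) :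
    omegaChi e (A, B) (f * X - X * f, f * Y + Y * f) =
      Matrix.trace ((f * (e * B + B * e) + (e * B + B * e) * f) * Y) -
        Matrix.trace ((f * (e * A - A * e) - (e * A - A * e) * f) * X) := by
  rw [omegaChi, add_assoc, mul_add, Matrix.trace_add, Matrix.trace_mul_commutator,
    Matrix.trace_mul_anticommutator, Matrix.trace_mul_commutator,
    Matrix.trace_mul_anticommutator]
  simp only [sub_mul, add_mul, Matrix.trace_sub, Matrix.trace_add]
  ring

/-- For an `sl₂`-triple `(e, h, f)`, the form `ω_χ` restricts to a non-degenerate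
form on `Π[g, F]`. -/
theorem stmt6 (n : ℕ) (e h f : Matrix (Fin n) (Fin n) ℂ)
    (h1 : h * e - e * h = 2 • e) (h2 : h * f - f * h = -(2 • f))
    (h3 : e * f - f * e = h) :
    ∀ p ∈ piBracketF f, (∀ q ∈ piBracketF f, omegaChi e p q = 0) → p = (0, 0) := by
  rcases eq_or_ne h 0 with rfl | hh
  · have hf : (2 : ℂ) • f = 0 := by
      rw [two_smul, ← two_nsmul, ← neg_eq_zero, ← h2, zero_mul, mul_zero, sub_zero]
    rintro _ ⟨C, D, rfl⟩ -
    simp [(smul_eq_zero.mp hf).resolve_left two_ne_zero]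
  have t : IsSl2Triple h e f :=
    ⟨hh, by rwa [Ring.lie_def], by rwa [Ring.lie_def], by rwa [Ring.lie_def]⟩
  rintro _ ⟨C, D, rfl⟩ hω
  have hC : C ∈ LinearMap.ker (ad ℂ _ f * ad ℂ _ e * ad ℂ _ f) := by
    refine Matrix.ext_iff_trace_mul_right.mpr fun X => ?_
    have := hω _ ⟨X, 0, rfl⟩
    rw [omegaChi_eq_trace_sub_trace] at this
    simpa [Ring.lie_def] using this
  have hD : D ∈ LinearMap.ker
      (anticommutatorMap ℂ f * anticommutatorMap ℂ e * anticommutatorMap ℂ f) := by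
    refine Matrix.ext_iff_trace_mul_right.mpr fun Y => ?_
    have := hω _ ⟨0, Y, rfl⟩
    rw [omegaChi_eq_trace_sub_trace] at this
    simpa using this
  rw [t.isSl2Triple_ad.ker_f_mul_e_mul_f] at hC
  rw [t.isSl2Triple_anticommutatorMap.ker_f_mul_e_mul_f] at hD
  simp only [LinearMap.mem_ker, ad_apply, Ring.lie_def, anticommutatorMap_apply] at hC hD
  rw [hC, hD]
end

section
/- Let (e,h,f) be an sl₂-triple in Matrix (Fin n) (Fin n) ℂ. For a pair (A,B) of n×n complex matrices, the following are equivalent: (∀ A' B' : Matrix (Fin n) (Fin n) ℂ, Matrix.trace (e * (A*A' - A'*A + B*B' + B'*B)) = 0) ↔ (e*A = A*e ∧ e*B + B*e = 0). That is, the radical of the form ω_χ on q(n) (equivalently, the centralizer g^χ of the linear form χ) coincides with the super-centralizer g^E of the odd element E = (0,e). -/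
private lemma trace_forall_zero {n : ℕ} (M : Matrix (Fin n) (Fin n) ℂ)
    (H : ∀ X : Matrix (Fin n) (Fin n) ℂ, Matrix.trace (M * X) = 0) : M = 0 := by
  ext i j
  have := H (Matrix.single j i 1)
  rw [Matrix.trace] at this
  simpa [Matrix.diag, Matrix.mul_apply, Matrix.single, ite_and,
    Finset.sum_ite_eq, Finset.sum_ite_eq', eq_comm] using this

/-- For an `sl₂`-triple `(e, h, f)` of `n × n` complex matrices, a pair `(A, B)` lies
in the radical of the form `ω_χ(x, y) = trace (e * (first component of [x, y]))` on
the pair model of `q(n)` (i.e. in the centralizer `g^χ` of the linear form `χ`) iff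
it lies in the super-centralizer `g^E` of the odd element `E = (0, e)`, i.e. iff
`e*A = A*e` and `e*B + B*e = 0`. -/
theorem stmt7 (n : ℕ) (e h f : Matrix (Fin n) (Fin n) ℂ)
    (h1 : h * e - e * h = 2 • e) (h2 : h * f - f * h = -(2 • f))
    (h3 : e * f - f * e = h) (A B : Matrix (Fin n) (Fin n) ℂ) :
    (∀ A' B' : Matrix (Fin n) (Fin n) ℂ,
        Matrix.trace (e * (A * A' - A' * A + B * B' + B' * B)) = 0) ↔
      (e * A = A * e ∧ e * B + B * e = 0) := by
  constructor
  · intro H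
    constructor
    · have hA : e * A - A * e = 0 := by
        apply trace_forall_zero
        intro X
        have hx := H X 0
        simp only [Matrix.mul_zero, Matrix.zero_mul, add_zero] at hx
        calc Matrix.trace ((e * A - A * e) * X)
            = Matrix.trace (e * (A * X - X * A)) := by
              simp only [Matrix.sub_mul, Matrix.mul_sub, Matrix.trace_sub,
                ← Matrix.mul_assoc]
              rw [Matrix.trace_mul_cycle e X A]
          _ = 0 := hx
        -- done
      exact sub_eq_zero.mp hA
    · have hB : e * B + B * e = 0 := by
        apply trace_forall_zero
        intro X
        have hx := H 0 X
        simp only [Matrix.mul_zero, Matrix.zero_mul, sub_zero, zero_add] at hx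
        calc Matrix.trace ((e * B + B * e) * X)
            = Matrix.trace (e * (B * X + X * B)) := by
              simp only [Matrix.add_mul, Matrix.mul_add, Matrix.trace_add,
                ← Matrix.mul_assoc]
              rw [Matrix.trace_mul_cycle e X B]
          _ = 0 := hx
      exact hB
  · rintro ⟨hA, hB⟩ A' B'
    have hB' : B * e = -(e * B) := by rw [eq_neg_iff_add_eq_zero, add_comm]; exact hB
    simp only [Matrix.mul_add, Matrix.mul_sub, Matrix.trace_add, Matrix.trace_sub]
    have t1 : Matrix.trace (e * (A * A')) = Matrix.trace (e * (A' * A)) := by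
      simp only [← Matrix.mul_assoc]
      rw [hA, Matrix.trace_mul_cycle e A' A]
    have t2 : Matrix.trace (e * (B * B')) = -Matrix.trace (e * (B' * B)) := by
      simp only [← Matrix.mul_assoc]
      rw [Matrix.trace_mul_cycle e B' B, hB']
      simp [Matrix.neg_mul]
    rw [t1, t2]
    ring
end

section
/- Let (e,h,f) be an sl₂-triple in Matrix (Fin n) (Fin n) ℂ. The linear map Φ on pairs given by Φ(A,B) := (e*B + B*e, e*A - A*e) restricts to a bijection from W₋ := {(A,B) : h*A - A*h = -A ∧ h*B - B*h = -B} onto W₊ := {(A,B) : h*A - A*h = A ∧ h*B - B*h = B}. -/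
open Module

section AbstractSl2

variable {V : Type*} [AddCommGroup V] [Module ℂ V]

lemma sl2aux_chain_weight (F H : V →ₗ[ℂ] V)
    (hF : ∀ v, H (F v) = F (H v) - (2:ℂ) • F v)
    (v : V) (μ : ℂ) (hv : H v = μ • v) :
    ∀ k : ℕ, H ((F ^ k) v) = (μ - 2 * k) • (F ^ k) v := by
  intro k
  induction k with
  | zero => simpa using hv
  | succ k ih =>
    have hstep : (F ^ (k+1)) v = F ((F ^ k) v) := by
      rw [pow_succ']; rfl
    rw [hstep, hF, ih, map_smul, ← sub_smul]
    congr 1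
    push_cast
    ring

lemma sl2aux_lowest (E F H : V →ₗ[ℂ] V)
    (hF : ∀ v, H (F v) = F (H v) - (2:ℂ) • F v)
    (hH : ∀ v, E (F v) = F (E v) + H v)
    (v : V) (hv : H v = -v) (hev : E v = 0) :
    ∀ k : ℕ, E ((F ^ (k+1)) v) = (-((k:ℂ)+1)^2) • (F ^ k) v := by
  have hv' : H v = (-1 : ℂ) • v := by rw [hv, neg_one_smul]
  have hw := sl2aux_chain_weight F H hF v (-1) hv'
  intro k
  induction k with
  | zero =>
    have h1 : (F ^ 1) v = F v := by simp
    rw [h1, hH, hev, map_zero, zero_add, hv, pow_zero, Module.End.one_apply]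
    norm_num
  | succ k ih =>
    have hstep : (F ^ (k+2)) v = F ((F ^ (k+1)) v) := by
      rw [pow_succ']; rfl
    have hstep' : F ((F ^ k) v) = (F ^ (k+1)) v := by
      rw [pow_succ']; rfl
    rw [hstep, hH, ih, map_smul, hstep', hw (k+1), ← add_smul]
    congr 1
    push_cast
    ring

lemma sl2aux_inj [FiniteDimensional ℂ V] (E F H : V →ₗ[ℂ] V)
    (hF : ∀ v, H (F v) = F (H v) - (2:ℂ) • F v)
    (hH : ∀ v, E (F v) = F (E v) + H v)
    (v : V) (hv : H v = -v) (hev : E v = 0) : v = 0 := by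
  by_contra hv0
  have hnz : ∀ k : ℕ, (F ^ k) v ≠ 0 := by
    intro k
    induction k with
    | zero => simpa using hv0
    | succ k ih =>
      intro hzero
      have hlow := sl2aux_lowest E F H hF hH v hv hev k
      rw [hzero, map_zero] at hlow
      have hk1 : ((k:ℂ)+1) ≠ 0 := by
        exact Nat.cast_add_one_ne_zero k
      have hc : (-((k:ℂ)+1)^2) ≠ 0 := by
        simp [hk1]
      rcases smul_eq_zero.mp hlow.symm with h' | h'
      · exact hc h'
      · exact ih h'
  have hv' : H v = (-1 : ℂ) • v := by rw [hv, neg_one_smul]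
  have hw := sl2aux_chain_weight F H hF v (-1) hv'
  have hli : LinearIndependent ℂ
      (fun k : Fin (finrank ℂ V + 1) => (F ^ (k:ℕ)) v) := by
    apply Module.End.eigenvectors_linearIndependent' H
      (fun k : Fin (finrank ℂ V + 1) => ((-1 : ℂ) - 2 * (k:ℕ)))
    · intro a b hab
      have h2 : ((a:ℕ):ℂ) = ((b:ℕ):ℂ) := by
        have := hab
        simp only at this
        linear_combination (-(1:ℂ)/2) * this
      exact Fin.ext (Nat.cast_injective h2)
    · intro k
      exact ⟨Module.End.mem_eigenspace_iff.mpr (hw k), hnz k⟩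
  have hcard := hli.fintype_card_le_finrank
  simp at hcard

lemma sl2aux_bijOn [FiniteDimensional ℂ V] (E F H : V →ₗ[ℂ] V)
    (hE : ∀ v, H (E v) = E (H v) + (2:ℂ) • E v)
    (hF : ∀ v, H (F v) = F (H v) - (2:ℂ) • F v)
    (hH : ∀ v, E (F v) = F (E v) + H v) :
    Set.BijOn E {v | H v = -v} {v | H v = v} := by
  have hmapsE : ∀ v : V, H v = -v → H (E v) = E v := by
    intro v hv
    rw [hE, hv, map_neg, two_smul]
    abel
  have hmapsF : ∀ v : V, H v = v → H (F v) = -(F v) := by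
    intro v hv
    rw [hF, hv, two_smul]
    abel
  have hFinj : ∀ v : V, H v = v → F v = 0 → v = 0 := by
    intro v hv hfv
    refine sl2aux_inj F E (-H) ?_ ?_ v ?_ hfv
    · intro w
      simp only [LinearMap.neg_apply, map_neg]
      rw [hE w, two_smul]
      abel
    · intro w
      simp only [LinearMap.neg_apply]
      rw [hH w]
      abel
    · rw [LinearMap.neg_apply, hv]
  have hEinjOn : Set.InjOn E {v | H v = -v} := by
    intro a ha b hb hab
    have h0 : E (a - b) = 0 := by rw [map_sub, hab, sub_self]
    have hm : H (a - b) = -(a - b) := by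
      rw [map_sub, ha, hb]; abel
    have := sl2aux_inj E F H hF hH (a - b) hm h0
    exact sub_eq_zero.mp this
  set Wm : Submodule ℂ V := LinearMap.ker (H + LinearMap.id) with hWmdef
  set Wp : Submodule ℂ V := LinearMap.ker (H - LinearMap.id) with hWpdef
  have hWm : ∀ v : V, v ∈ Wm ↔ H v = -v := by
    intro v
    simp [hWmdef, LinearMap.mem_ker, LinearMap.add_apply, add_eq_zero_iff_eq_neg]
  have hWp : ∀ v : V, v ∈ Wp ↔ H v = v := by
    intro v
    simp [hWpdef, LinearMap.mem_ker, LinearMap.sub_apply, sub_eq_zero]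
  have hrE : ∀ v ∈ Wm, E v ∈ Wp := fun v hv => (hWp _).mpr (hmapsE v ((hWm v).mp hv))
  have hrF : ∀ v ∈ Wp, F v ∈ Wm := fun v hv => (hWm _).mpr (hmapsF v ((hWp v).mp hv))
  let E' : Wm →ₗ[ℂ] Wp := E.restrict hrE
  let F' : Wp →ₗ[ℂ] Wm := F.restrict hrF
  have hE'inj : Function.Injective E' := by
    intro a b hab
    apply Subtype.ext
    refine hEinjOn ((hWm _).mp a.2) ((hWm _).mp b.2) ?_
    have := congrArg Subtype.val hab
    simpa [E', LinearMap.restrict_apply] using this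
  have hF'inj : Function.Injective F' := by
    intro a b hab
    apply Subtype.ext
    have habv : F (a.1) = F (b.1) := by
      have := congrArg Subtype.val hab
      simpa [F', LinearMap.restrict_apply] using this
    have h0 : F ((a:V) - b) = 0 := by rw [map_sub, habv, sub_self]
    have hm : H ((a:V) - b) = (a:V) - b := by
      rw [map_sub, (hWp _).mp a.2, (hWp _).mp b.2]
    have := hFinj _ hm h0
    exact sub_eq_zero.mp this
  have hrank : finrank ℂ Wm = finrank ℂ Wp :=
    le_antisymm (LinearMap.finrank_le_finrank_of_injective hE'inj)
      (LinearMap.finrank_le_finrank_of_injective hF'inj)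
  have hE'surj : Function.Surjective E' :=
    (LinearMap.injective_iff_surjective_of_finrank_eq_finrank hrank).mp hE'inj
  refine ⟨fun v hv => hmapsE v hv, hEinjOn, ?_⟩
  intro w hw
  obtain ⟨u, hu⟩ := hE'surj ⟨w, (hWp w).mpr hw⟩
  refine ⟨u.1, (hWm _).mp u.2, ?_⟩
  have := congrArg Subtype.val hu
  simpa [E', LinearMap.restrict_apply] using this

end AbstractSl2

/-- For an `sl₂`-triple `(e, h, f)` of `n × n` complex matrices, the super-adjoint
action `ad E : (A, B) ↦ (e*B + B*e, e*A - A*e)` of the odd element `E = (0, e)` in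
the pair model of `q(n)` restricts to a bijection from the `(-1)`-eigenspace
`g(-1)` of `ad h` onto the `1`-eigenspace `g(1)`. -/
theorem stmt8 (n : ℕ) (e h f : Matrix (Fin n) (Fin n) ℂ)
    (h1 : h * e - e * h = 2 • e) (h2 : h * f - f * h = -(2 • f))
    (h3 : e * f - f * e = h) :
    Set.BijOn
      (fun p : Matrix (Fin n) (Fin n) ℂ × Matrix (Fin n) (Fin n) ℂ =>
        (e * p.2 + p.2 * e, e * p.1 - p.1 * e))
      {p | h * p.1 - p.1 * h = -p.1 ∧ h * p.2 - p.2 * h = -p.2}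
      {p | h * p.1 - p.1 * h = p.1 ∧ h * p.2 - p.2 * h = p.2} := by
  have h1' : h * e - e * h = e + e := by rw [h1, two_smul]
  have h2' : h * f - f * h = -(f + f) := by rw [h2, two_smul]
  -- commutator action linear maps
  let ρe : Matrix (Fin n) (Fin n) ℂ →ₗ[ℂ] Matrix (Fin n) (Fin n) ℂ := LinearMap.mulLeft ℂ e - LinearMap.mulRight ℂ e
  let ρf : Matrix (Fin n) (Fin n) ℂ →ₗ[ℂ] Matrix (Fin n) (Fin n) ℂ := LinearMap.mulLeft ℂ f - LinearMap.mulRight ℂ f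
  let ρh : Matrix (Fin n) (Fin n) ℂ →ₗ[ℂ] Matrix (Fin n) (Fin n) ℂ := LinearMap.mulLeft ℂ h - LinearMap.mulRight ℂ h
  -- anticommutator action linear maps
  let σe : Matrix (Fin n) (Fin n) ℂ →ₗ[ℂ] Matrix (Fin n) (Fin n) ℂ := LinearMap.mulLeft ℂ e + LinearMap.mulRight ℂ e
  let σf : Matrix (Fin n) (Fin n) ℂ →ₗ[ℂ] Matrix (Fin n) (Fin n) ℂ := LinearMap.mulLeft ℂ f + LinearMap.mulRight ℂ f
  have hsimp : ∀ x A : Matrix (Fin n) (Fin n) ℂ, (LinearMap.mulLeft ℂ x - LinearMap.mulRight ℂ x) A = x * A - A * x := by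
    intro x A; simp
  have hsimp' : ∀ x A : Matrix (Fin n) (Fin n) ℂ, (LinearMap.mulLeft ℂ x + LinearMap.mulRight ℂ x) A = x * A + A * x := by
    intro x A; simp
  have Bρ : Set.BijOn ρe {A : Matrix (Fin n) (Fin n) ℂ | ρh A = -A} {A : Matrix (Fin n) (Fin n) ℂ | ρh A = A} := by
    refine sl2aux_bijOn ρe ρf ρh ?_ ?_ ?_
    · intro A
      simp only [ρe, ρh, hsimp]
      rw [show (2:ℂ) • (e * A - A * e) = (h * e - e * h) * A - A * (h * e - e * h) by
        rw [h1', two_smul]; noncomm_ring]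
      noncomm_ring
    · intro A
      simp only [ρf, ρh, hsimp]
      rw [show (2:ℂ) • (f * A - A * f) = -((h * f - f * h) * A - A * (h * f - f * h)) by
        rw [h2', two_smul]; noncomm_ring]
      noncomm_ring
    · intro A
      simp only [ρe, ρf, ρh, hsimp]
      rw [← h3]
      noncomm_ring
  have Bσ : Set.BijOn σe {A : Matrix (Fin n) (Fin n) ℂ | ρh A = -A} {A : Matrix (Fin n) (Fin n) ℂ | ρh A = A} := by
    refine sl2aux_bijOn σe σf ρh ?_ ?_ ?_
    · intro A
      simp only [σe, ρh, hsimp, hsimp']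
      rw [show (2:ℂ) • (e * A + A * e) = (h * e - e * h) * A + A * (h * e - e * h) by
        rw [h1', two_smul]; noncomm_ring]
      noncomm_ring
    · intro A
      simp only [σf, ρh, hsimp, hsimp']
      rw [show (2:ℂ) • (f * A + A * f) = -((h * f - f * h) * A + A * (h * f - f * h)) by
        rw [h2', two_smul]; noncomm_ring]
      noncomm_ring
    · intro A
      simp only [σe, σf, ρh, hsimp, hsimp']
      rw [← h3]
      noncomm_ring
  have Bρ' : Set.BijOn (fun A : Matrix (Fin n) (Fin n) ℂ => e * A - A * e)
      {A : Matrix (Fin n) (Fin n) ℂ | h * A - A * h = -A} {A : Matrix (Fin n) (Fin n) ℂ | h * A - A * h = A} := by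
    have hfun : ⇑ρe = fun A : Matrix (Fin n) (Fin n) ℂ => e * A - A * e := by
      funext A; simp [ρe]
    have hs1 : {A : Matrix (Fin n) (Fin n) ℂ | ρh A = -A} = {A : Matrix (Fin n) (Fin n) ℂ | h * A - A * h = -A} := by
      ext A; simp [ρh]
    have hs2 : {A : Matrix (Fin n) (Fin n) ℂ | ρh A = A} = {A : Matrix (Fin n) (Fin n) ℂ | h * A - A * h = A} := by
      ext A; simp [ρh]
    rw [hfun, hs1, hs2] at Bρ
    exact Bρ
  have Bσ' : Set.BijOn (fun A : Matrix (Fin n) (Fin n) ℂ => e * A + A * e)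
      {A : Matrix (Fin n) (Fin n) ℂ | h * A - A * h = -A} {A : Matrix (Fin n) (Fin n) ℂ | h * A - A * h = A} := by
    have hfun : ⇑σe = fun A : Matrix (Fin n) (Fin n) ℂ => e * A + A * e := by
      funext A; simp [σe]
    have hs1 : {A : Matrix (Fin n) (Fin n) ℂ | ρh A = -A} = {A : Matrix (Fin n) (Fin n) ℂ | h * A - A * h = -A} := by
      ext A; simp [ρh]
    have hs2 : {A : Matrix (Fin n) (Fin n) ℂ | ρh A = A} = {A : Matrix (Fin n) (Fin n) ℂ | h * A - A * h = A} := by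
      ext A; simp [ρh]
    rw [hfun, hs1, hs2] at Bσ
    exact Bσ
  constructor
  · intro p hp
    exact ⟨Bσ'.mapsTo hp.2, Bρ'.mapsTo hp.1⟩
  constructor
  · intro p hp q hq hpq
    have hfst : e * p.2 + p.2 * e = e * q.2 + q.2 * e := congrArg Prod.fst hpq
    have hsnd : e * p.1 - p.1 * e = e * q.1 - q.1 * e := congrArg Prod.snd hpq
    exact Prod.ext (Bρ'.injOn hp.1 hq.1 hsnd) (Bσ'.injOn hp.2 hq.2 hfst)
  · intro w hw
    obtain ⟨B, hB, hB2⟩ := Bσ'.surjOn hw.1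
    obtain ⟨A, hA, hA2⟩ := Bρ'.surjOn hw.2
    exact ⟨(A, B), ⟨hA, hB⟩, Prod.ext hB2 hA2⟩
end

section
/- Let (e,h,f) be an sl₂-triple in Matrix (Fin n) (Fin n) ℂ, let m : ℤ with m ≤ -1, and set c := (m : ℂ). (i) For every A : Matrix (Fin n) (Fin n) ℂ with h*A - A*h = c • A there exists C with h*C - C*h = (c+2) • C and A = f*C - C*f. (ii) For every B : Matrix (Fin n) (Fin n) ℂ with h*B - B*h = c • B there exists D with h*D - D*h = (c+2) • D and B = f*D + D*f. -/
open Module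

namespace Stmt10Aux

variable {V : Type*} [AddCommGroup V] [Module ℂ V]

lemma pow_apply_succ (E : Module.End ℂ V) (s : ℕ) (x : V) :
    (E ^ (s + 1)) x = E ((E ^ s) x) := by
  rw [pow_succ']; exact Module.End.mul_apply ..

lemma pow_apply_succ' (E : Module.End ℂ V) (s : ℕ) (x : V) :
    (E ^ (s + 1)) x = (E ^ s) (E x) := by
  rw [pow_succ]; exact Module.End.mul_apply ..

section Identities

variable {E H F : Module.End ℂ V}

/-- pointwise form of `[H,E] = 2E`. -/
lemma he_apply (hHE : H * E - E * H = (2:ℂ) • E) (x : V) :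
    H (E x) = E (H x) + (2:ℂ) • E x := by
  have := congrArg (fun (T : Module.End ℂ V) => T x) hHE
  simp only [LinearMap.sub_apply, Module.End.mul_apply, LinearMap.smul_apply] at this
  linear_combination (norm := module) this

/-- weights go up by 2 under powers of `E`. -/
lemma weight_pow (hHE : H * E - E * H = (2:ℂ) • E) {v : V} {c : ℂ}
    (hv : H v = c • v) (s : ℕ) :
    H ((E ^ s) v) = (c + 2 * s) • (E ^ s) v := by
  induction s with
  | zero => simpa using hv
  | succ s ih =>
    rw [pow_apply_succ, he_apply hHE, ih, map_smul]
    push_cast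
    module

/-- key identity: `F (E^(s+1) v) = E^(s+1) (F v) - (s+1)(c+s) • E^s v` for `H v = c • v`. -/
lemma key (hHE : H * E - E * H = (2:ℂ) • E) (hEF : E * F - F * E = H)
    {c : ℂ} (s : ℕ) : ∀ v : V, H v = c • v →
    F ((E ^ (s + 1)) v) = (E ^ (s + 1)) (F v) - (((s:ℂ) + 1) * (c + s)) • (E ^ s) v := by
  induction s generalizing c with
  | zero =>
    intro v hv
    have h0 := congrArg (fun (T : Module.End ℂ V) => T v) hEF
    simp only [LinearMap.sub_apply, Module.End.mul_apply] at h0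
    have hfe : F (E v) = E (F v) - c • v := by
      linear_combination (norm := module) -h0 - hv
    simp only [zero_add, pow_one, pow_zero, Module.End.one_apply, Nat.cast_zero]
    rw [hfe]
    module
  | succ s ih =>
    intro v hv
    have hEv : H (E v) = (c + 2) • (E v) := by
      have := weight_pow hHE hv 1
      rw [pow_one] at this
      norm_num at this
      exact this
    have h1 : F ((E ^ (s + 1 + 1)) v) = F ((E ^ (s + 1)) (E v)) := by
      rw [pow_apply_succ']
    have h2 := ih (E v) hEv
    have h0 := congrArg (fun (T : Module.End ℂ V) => T v) hEF
    simp only [LinearMap.sub_apply, Module.End.mul_apply] at h0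
    have hfe : F (E v) = E (F v) - c • v := by
      linear_combination (norm := module) -h0 - hv
    rw [h1, h2, hfe, map_sub, map_smul, ← pow_apply_succ' E (s+1) (F v),
      ← pow_apply_succ' E s v]
    push_cast
    module

end Identities

end Stmt10Aux

namespace Stmt10Aux

open Module

variable {V : Type*} [AddCommGroup V] [Module ℂ V]

/-- no infinite family of nonzero eigenvectors with pairwise distinct eigenvalues
in a finite-dimensional space. -/
lemma nochain [FiniteDimensional ℂ V] (H : Module.End ℂ V) (x : ℕ → V) (μ : ℕ → ℂ)
    (hinj : Function.Injective μ) (hx : ∀ j, x j ≠ 0)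
    (hH : ∀ j, H (x j) = μ j • x j) : False := by
  have li : LinearIndependent ℂ x :=
    H.eigenvectors_linearIndependent' μ hinj x
      (fun j => ⟨Module.End.mem_eigenspace_iff.mpr (hH j), hx j⟩)
  have h1 := li.cardinalMk_le_finrank
  simp only [Cardinal.mk_eq_aleph0] at h1
  exact absurd h1 (Cardinal.nat_lt_aleph0 _).not_ge

section Triple

variable {E H F : Module.End ℂ V}

/-- `E` is injective on weight spaces with integral weight `≤ -1`. -/
lemma lemA [FiniteDimensional ℂ V]
    (hHE : H * E - E * H = (2:ℂ) • E) (hHF : H * F - F * H = -((2:ℂ) • F))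
    (hEF : E * F - F * E = H)
    {m : ℤ} (hm : m ≤ -1) {v : V} (hv : H v = (m:ℂ) • v) (h0 : E v = 0) :
    v = 0 := by
  -- the swapped triple (F, -H, E)
  have hHE' : (-H) * F - F * (-H) = (2:ℂ) • F := by
    rw [neg_mul, mul_neg, sub_neg_eq_add, neg_add_eq_sub, ← neg_sub, hHF, neg_neg]
  have hEF' : F * E - E * F = -H := by rw [← hEF, neg_sub]
  have hvm : (-H) v = (-(m:ℂ)) • v := by rw [LinearMap.neg_apply, hv, neg_smul]
  by_contra hv0
  -- all F^j v are nonzero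
  have hne : ∀ j : ℕ, (F ^ j) v ≠ 0 := by
    intro j
    induction j with
    | zero => simpa using hv0
    | succ j ih =>
      intro hz
      have hk := key hHE' hEF' j v hvm
      rw [hz, map_zero, h0, map_zero, zero_sub, eq_comm, neg_eq_zero,
        smul_eq_zero] at hk
      rcases hk with hk | hk
      · have hj1 : ((j:ℂ) + 1) ≠ 0 := by
          exact_mod_cast (by omega : (j:ℤ) + 1 ≠ 0)
        have hz2 : (-(m:ℂ) + j) = 0 := by
          rcases mul_eq_zero.mp hk with h | h
          · exact absurd h hj1
          · exact h
        have hmj : (m:ℂ) = ((j:ℤ):ℂ) := by push_cast; linear_combination -hz2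
        have : m = (j:ℤ) := by exact_mod_cast hmj
        omega
      · exact ih hk
  -- eigenvalue chain m - 2j
  exact nochain H (fun j => (F ^ j) v) (fun j => (m:ℂ) - 2 * j)
    (fun a b hab => by
      have : (a:ℂ) = b := by linear_combination -hab/2
      exact_mod_cast this)
    hne
    (fun j => by
      have := weight_pow hHE' hvm j
      rw [LinearMap.neg_apply, neg_eq_iff_eq_neg] at this
      rw [this]
      module)

end Triple

end Stmt10Aux

namespace Stmt10Aux

open Module

variable {V : Type*} [AddCommGroup V] [Module ℂ V]
variable {E H F : Module.End ℂ V}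

/-- `ker F ∩ im E` is trivial on weight spaces with integral weight `≤ -1 + 2`. -/
lemma lemB [FiniteDimensional ℂ V]
    (hHE : H * E - E * H = (2:ℂ) • E) (hHF : H * F - F * H = -((2:ℂ) • F))
    (hEF : E * F - F * E = H)
    {m : ℤ} (hm : m ≤ -1) {v : V} (hv : H v = (m:ℂ) • v) (hFEv : F (E v) = 0) :
    E v = 0 := by
  have hHE' : (-H) * F - F * (-H) = (2:ℂ) • F := by
    rw [neg_mul, mul_neg, sub_neg_eq_add, neg_add_eq_sub, ← neg_sub, hHF, neg_neg]
  have hEF' : F * E - E * F = -H := by rw [← hEF, neg_sub]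
  have hvm : (-H) v = (-(m:ℂ)) • v := by rw [LinearMap.neg_apply, hv, neg_smul]
  by_contra hu
  set u := E v with hu_def
  have hu_w : H u = ((m:ℂ) + 2) • u := by
    have := weight_pow hHE hv 1
    rw [pow_one] at this
    norm_num at this
    exact this
  -- find minimal k with E^k u = 0
  have hex : ∃ k, (E ^ k) u = 0 := by
    by_contra hall
    push_neg at hall
    exact nochain H (fun j => (E ^ j) u) (fun j => ((m:ℂ) + 2) + 2 * j)
      (fun a b hab => by
        have : (a:ℂ) = b := by linear_combination hab/2
        exact_mod_cast this)
      hall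
      (fun j => weight_pow hHE hu_w j)
  classical
  let k := Nat.find hex
  have hk0 : (E ^ k) u = 0 := Nat.find_spec hex
  have hkpos : k ≠ 0 := by
    intro hk
    apply hu
    simpa [hk] using hk0
  obtain ⟨t, ht⟩ : ∃ t, k = t + 1 := ⟨k - 1, by omega⟩
  have hkt : (E ^ (t + 1)) u = 0 := by rw [← ht]; exact hk0
  have htne : (E ^ t) u ≠ 0 := Nat.find_min hex (by omega)
  -- F kills u, so applying `key` to the vanishing power pins down m = -(t+2)
  have hkey := key hHE hEF t u hu_w
  rw [hkt, map_zero, hFEv, map_zero, zero_sub, eq_comm, neg_eq_zero,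
    smul_eq_zero] at hkey
  have hmt : m = -(t:ℤ) - 2 := by
    rcases hkey with hk | hk
    · rcases mul_eq_zero.mp hk with h | h
      · exact absurd h (by exact_mod_cast (by omega : (t:ℤ) + 1 ≠ 0))
      · have : (m:ℂ) = ((-(t:ℤ) - 2 : ℤ) : ℂ) := by push_cast; linear_combination h
        exact_mod_cast this
    · exact absurd hk htne
  -- the chain: E^(t+1+j) (F^j v) ≠ 0 and E^(t+2+j) (F^j v) = 0 for all j
  have hchain : ∀ j : ℕ, (E ^ (t + 2 + j)) ((F ^ j) v) = 0 ∧
      (E ^ (t + 1 + j)) ((F ^ j) v) ≠ 0 := by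
    intro j
    induction j with
    | zero =>
      constructor
      · show (E ^ (t + 2)) ((F ^ 0) v) = 0
        rw [pow_zero, Module.End.one_apply]
        have : (E ^ (t + 2)) v = (E ^ (t + 1)) (E v) := pow_apply_succ' E (t+1) v
        rw [this, ← hu_def, hkt]
      · show (E ^ (t + 1)) ((F ^ 0) v) ≠ 0
        rw [pow_zero, Module.End.one_apply]
        have : (E ^ (t + 1)) v = (E ^ t) (E v) := pow_apply_succ' E t v
        rw [this, ← hu_def]
        exact htne
    | succ j ih =>
      obtain ⟨ihz, ihnz⟩ := ih
      -- weight of F^j v is m - 2j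
      have hvj : H ((F ^ j) v) = ((m:ℂ) - 2 * j) • ((F ^ j) v) := by
        have h := weight_pow hHE' hvm j
        rw [LinearMap.neg_apply, neg_eq_iff_eq_neg] at h
        rw [h]; module
      -- apply key with s := t + 1 + j to the vector F^j v
      have hkey2 := key hHE hEF (t + 1 + j) ((F ^ j) v) hvj
      rw [show t + 1 + j + 1 = t + 2 + j by omega, ihz, map_zero] at hkey2
      -- F ((F^j) v) = (F^(j+1)) v
      have hFF : F ((F ^ j) v) = (F ^ (j + 1)) v := (pow_apply_succ F j v).symm
      rw [hFF] at hkey2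
      -- hkey2 : 0 = E^(t+2+j) (F^(j+1) v) - coeff • E^(t+1+j) (F^j v)
      have hco : ((((t + 1 + j : ℕ)):ℂ) + 1) * (((m:ℂ) - 2 * (j:ℂ)) + ((t + 1 + j : ℕ) : ℂ)) ≠ 0 := by
        have h1 : ((((t + 1 + j : ℕ)):ℂ) + 1) ≠ 0 := by
          exact_mod_cast (by omega : ((t:ℤ) + 1 + j) + 1 ≠ 0)
        have h2 : (((m:ℂ) - 2 * (j:ℂ)) + ((t + 1 + j : ℕ) : ℂ)) ≠ 0 := by
          intro hz
          have hz' : ((m + t + 1 - j : ℤ) : ℂ) = 0 := by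
            push_cast at hz ⊢; linear_combination hz
          have : (m + t + 1 - j : ℤ) = 0 := by exact_mod_cast hz'
          omega
        exact mul_ne_zero h1 h2
      have heq : (E ^ (t + 2 + j)) ((F ^ (j + 1)) v) =
          (((((t + 1 + j : ℕ)):ℂ) + 1) * (((m:ℂ) - 2 * (j:ℂ)) + ((t + 1 + j : ℕ) : ℂ))) •
            (E ^ (t + 1 + j)) ((F ^ j) v) := by
        linear_combination (norm := module) -hkey2
      constructor
      · -- E^(t+2+(j+1)) (F^(j+1) v) = 0 : apply E to heq
        have := congrArg E heq
        rw [map_smul, ← pow_apply_succ, ← pow_apply_succ] at this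
        rw [show t + 2 + (j + 1) = t + 2 + j + 1 by omega, this,
          show t + 1 + j + 1 = t + 2 + j by omega, ihz, smul_zero]
      · rw [show t + 1 + (j + 1) = t + 2 + j by omega, heq]
        exact smul_ne_zero hco ihnz
  -- all F^j v nonzero: contradiction by nochain
  have hne : ∀ j : ℕ, (F ^ j) v ≠ 0 := by
    intro j hz
    exact (hchain j).2 (by rw [hz, map_zero])
  exact nochain H (fun j => (F ^ j) v) (fun j => (m:ℂ) - 2 * j)
    (fun a b hab => by
      have : (a:ℂ) = b := by linear_combination -hab/2
      exact_mod_cast this)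
    hne
    (fun j => by
      have h := weight_pow hHE' hvm j
      rw [LinearMap.neg_apply, neg_eq_iff_eq_neg] at h
      rw [h]; module)

end Stmt10Aux

namespace Stmt10Aux

open Module FiniteDimensional

variable {V : Type*} [AddCommGroup V] [Module ℂ V]
variable {E H F : Module.End ℂ V}

lemma hf_apply (hHF : H * F - F * H = -((2:ℂ) • F)) (x : V) :
    H (F x) = F (H x) - (2:ℂ) • F x := by
  have := congrArg (fun (T : Module.End ℂ V) => T x) hHF
  simp only [LinearMap.sub_apply, Module.End.mul_apply, LinearMap.neg_apply,
    LinearMap.smul_apply] at this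
  linear_combination (norm := module) this

/-- surjectivity of `F` from the weight-(m+2) space onto the weight-m space, m ≤ -1. -/
lemma surj [FiniteDimensional ℂ V]
    (hHE : H * E - E * H = (2:ℂ) • E) (hHF : H * F - F * H = -((2:ℂ) • F))
    (hEF : E * F - F * E = H)
    {m : ℤ} (hm : m ≤ -1) {v : V} (hv : H v = (m:ℂ) • v) :
    ∃ w : V, H w = ((m:ℂ) + 2) • w ∧ v = F w := by
  set Wm := Module.End.eigenspace H (m:ℂ) with hWm
  set W2 := Module.End.eigenspace H ((m:ℂ) + 2) with hW2
  have hFmap : ∀ x ∈ W2, F x ∈ Wm := by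
    intro x hx
    rw [hW2, Module.End.mem_eigenspace_iff] at hx
    rw [hWm, Module.End.mem_eigenspace_iff, hf_apply hHF, hx, map_smul]
    module
  have hEmap : ∀ x ∈ Wm, E x ∈ W2 := by
    intro x hx
    rw [hWm, Module.End.mem_eigenspace_iff] at hx
    rw [hW2, Module.End.mem_eigenspace_iff, he_apply hHE, hx, map_smul]
    module
  set r : W2 →ₗ[ℂ] Wm := F.restrict hFmap with hr
  set s : Wm →ₗ[ℂ] W2 := E.restrict hEmap with hs
  have hs_inj : Function.Injective s := by
    rw [← LinearMap.ker_eq_bot]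
    rw [Submodule.eq_bot_iff]
    rintro ⟨x, hxW⟩ hx
    have hx' : E x = 0 := by
      have := congrArg (Subtype.val) hx
      simpa [hs, LinearMap.restrict_apply] using this
    have hxw : H x = (m:ℂ) • x := Module.End.mem_eigenspace_iff.mp hxW
    have : x = 0 := lemA hHE hHF hEF hm hxw hx'
    exact Subtype.ext this
  have hdisj : LinearMap.ker r ⊓ LinearMap.range s = ⊥ := by
    rw [Submodule.eq_bot_iff]
    rintro ⟨y, hyW⟩ ⟨hker, ⟨x, hxy⟩⟩
    have hxy' : E (x:V) = y := by
      have := congrArg (Subtype.val) hxy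
      simpa [hs, LinearMap.restrict_apply] using this
    have hFy : F y = 0 := by
      have := congrArg (Subtype.val) (LinearMap.mem_ker.mp hker)
      simpa [hr, LinearMap.restrict_apply] using this
    have hxw : H (x:V) = (m:ℂ) • (x:V) := Module.End.mem_eigenspace_iff.mp x.2
    have h0 : E (x:V) = 0 := lemB hHE hHF hEF hm hxw (by rw [hxy']; exact hFy)
    have hy0 : y = 0 := by rw [← hxy']; exact h0
    exact Subtype.ext (by simpa using hy0)
  -- dimension count
  have h1 : finrank ℂ (LinearMap.range r) + finrank ℂ (LinearMap.ker r) =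
      finrank ℂ W2 := LinearMap.finrank_range_add_finrank_ker r
  have h2 : finrank ℂ (LinearMap.range s) = finrank ℂ Wm :=
    LinearMap.finrank_range_of_inj hs_inj
  have h3 : finrank ℂ (LinearMap.ker r) + finrank ℂ (LinearMap.range s) ≤
      finrank ℂ W2 := by
    have := Submodule.finrank_sup_add_finrank_inf_eq (LinearMap.ker r)
      (LinearMap.range s)
    rw [hdisj] at this
    simp only [finrank_bot, add_zero] at this
    rw [← this]
    exact Submodule.finrank_le _
  have h4 : finrank ℂ Wm ≤ finrank ℂ (LinearMap.range r) := by omega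
  have h5 : LinearMap.range r = ⊤ := by
    apply Submodule.eq_top_of_finrank_eq
    exact le_antisymm (Submodule.finrank_le _) h4
  have hvW : v ∈ Wm := Module.End.mem_eigenspace_iff.mpr hv
  obtain ⟨w, hw⟩ := (LinearMap.range_eq_top.mp h5) ⟨v, hvW⟩
  refine ⟨(w : V), Module.End.mem_eigenspace_iff.mp w.2, ?_⟩
  have := congrArg (Subtype.val) hw
  simpa [hr, LinearMap.restrict_apply] using this.symm

end Stmt10Aux

namespace Stmt10Aux

variable {M : Type*} [Ring M] [Algebra ℂ M]

lemma brk (a b X : M) :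
    a*(b*X - X*b) - (b*X - X*b)*a - (b*(a*X - X*a) - (a*X - X*a)*b) =
      (a*b - b*a)*X - X*(a*b - b*a) := by noncomm_ring

lemma brk2 (a b X : M) :
    a*(b*X + X*b) - (b*X + X*b)*a - (b*(a*X - X*a) + (a*X - X*a)*b) =
      (a*b - b*a)*X + X*(a*b - b*a) := by noncomm_ring

lemma brk3 (a b X : M) :
    a*(b*X + X*b) + (b*X + X*b)*a - (b*(a*X + X*a) + (a*X + X*a)*b) =
      (a*b - b*a)*X - X*(a*b - b*a) := by noncomm_ring

end Stmt10Aux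

open Stmt10Aux in
/-- For an `sl₂`-triple `(e, h, f)` of `n × n` complex matrices and an integer
`m ≤ -1`: every `ad h` eigenvector with eigenvalue `m` is, in the even case, a
commutator `f*C - C*f` and, in the odd case, an anticommutator `f*D + D*f` with an
`ad h` eigenvector of eigenvalue `m + 2`. This encodes the surjectivity of
`ad F : g(i) → g(i-2)` for `i ≤ 1`, hence `⊕_{i ≤ -1} g(i) ⊆ Π[g, F]`. -/
theorem stmt10 (n : ℕ) (e h f : Matrix (Fin n) (Fin n) ℂ)
    (h1 : h * e - e * h = 2 • e) (h2 : h * f - f * h = -(2 • f))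
    (h3 : e * f - f * e = h) (m : ℤ) (hm : m ≤ -1) :
    (∀ A : Matrix (Fin n) (Fin n) ℂ, h * A - A * h = (m : ℂ) • A →
      ∃ C : Matrix (Fin n) (Fin n) ℂ,
        h * C - C * h = ((m : ℂ) + 2) • C ∧ A = f * C - C * f) ∧
    (∀ B : Matrix (Fin n) (Fin n) ℂ, h * B - B * h = (m : ℂ) • B →
      ∃ D : Matrix (Fin n) (Fin n) ℂ,
        h * D - D * h = ((m : ℂ) + 2) • D ∧ B = f * D + D * f) := by
  have h1' : h * e - e * h = (2:ℂ) • e := by rw [h1, two_smul, two_smul]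
  have h2' : h * f - f * h = -((2:ℂ) • f) := by rw [h2, two_smul, two_smul]
  set Ho : Module.End ℂ (Matrix (Fin n) (Fin n) ℂ) := LinearMap.mulLeft ℂ h - LinearMap.mulRight ℂ h with hHo
  set Eo : Module.End ℂ (Matrix (Fin n) (Fin n) ℂ) := LinearMap.mulLeft ℂ e - LinearMap.mulRight ℂ e with hEo
  set Fo : Module.End ℂ (Matrix (Fin n) (Fin n) ℂ) := LinearMap.mulLeft ℂ f - LinearMap.mulRight ℂ f with hFo
  set E2 : Module.End ℂ (Matrix (Fin n) (Fin n) ℂ) := LinearMap.mulLeft ℂ e + LinearMap.mulRight ℂ e with hE2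
  set F2 : Module.End ℂ (Matrix (Fin n) (Fin n) ℂ) := LinearMap.mulLeft ℂ f + LinearMap.mulRight ℂ f with hF2
  have appo : ∀ (a X : Matrix (Fin n) (Fin n) ℂ),
      (LinearMap.mulLeft ℂ a - LinearMap.mulRight ℂ a) X = a * X - X * a := by
    intro a X
    simp [LinearMap.sub_apply, LinearMap.mulLeft_apply, LinearMap.mulRight_apply]
  have appp : ∀ (a X : Matrix (Fin n) (Fin n) ℂ),
      (LinearMap.mulLeft ℂ a + LinearMap.mulRight ℂ a) X = a * X + X * a := by
    intro a X
    simp [LinearMap.add_apply, LinearMap.mulLeft_apply, LinearMap.mulRight_apply]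
  have hHE : Ho * Eo - Eo * Ho = (2:ℂ) • Eo := by
    apply LinearMap.ext; intro X
    simp only [LinearMap.sub_apply, Module.End.mul_apply, LinearMap.smul_apply,
      hHo, hEo, appo]
    refine (brk h e X).trans ?_
    rw [h1', smul_mul_assoc, mul_smul_comm, smul_sub]
  have hHF : Ho * Fo - Fo * Ho = -((2:ℂ) • Fo) := by
    apply LinearMap.ext; intro X
    simp only [LinearMap.sub_apply, Module.End.mul_apply, LinearMap.smul_apply,
      LinearMap.neg_apply, hHo, hFo, appo]
    refine (brk h f X).trans ?_
    rw [h2']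
    simp only [neg_mul, mul_neg, smul_mul_assoc, mul_smul_comm, smul_sub]
    module
  have hEF : Eo * Fo - Fo * Eo = Ho := by
    apply LinearMap.ext; intro X
    simp only [LinearMap.sub_apply, Module.End.mul_apply, hHo, hEo, hFo, appo]
    refine (brk e f X).trans ?_
    rw [h3]
  have hHE2 : Ho * E2 - E2 * Ho = (2:ℂ) • E2 := by
    apply LinearMap.ext; intro X
    simp only [LinearMap.sub_apply, LinearMap.add_apply, Module.End.mul_apply,
      LinearMap.smul_apply, hHo, hE2, appo, appp]
    refine (brk2 h e X).trans ?_
    rw [h1', smul_mul_assoc, mul_smul_comm, smul_add]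
  have hHF2 : Ho * F2 - F2 * Ho = -((2:ℂ) • F2) := by
    apply LinearMap.ext; intro X
    simp only [LinearMap.sub_apply, LinearMap.add_apply, Module.End.mul_apply,
      LinearMap.smul_apply, LinearMap.neg_apply, hHo, hF2, appo, appp]
    refine (brk2 h f X).trans ?_
    rw [h2']
    simp only [neg_mul, mul_neg, smul_mul_assoc, mul_smul_comm, smul_add]
    module
  have hEF2 : E2 * F2 - F2 * E2 = Ho := by
    apply LinearMap.ext; intro X
    simp only [LinearMap.sub_apply, LinearMap.add_apply, Module.End.mul_apply,
      hHo, hE2, hF2, appo, appp]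
    refine (brk3 e f X).trans ?_
    rw [h3]
  constructor
  · intro A hA
    have hA' : Ho A = (m:ℂ) • A := by rw [hHo, appo]; exact hA
    obtain ⟨w, hw1, hw2⟩ := surj hHE hHF hEF hm hA'
    refine ⟨w, ?_, ?_⟩
    · rw [hHo, appo] at hw1; exact hw1
    · rw [hFo, appo] at hw2; exact hw2
  · intro B hB
    have hB' : Ho B = (m:ℂ) • B := by rw [hHo, appo]; exact hB
    obtain ⟨w, hw1, hw2⟩ := surj hHE2 hHF2 hEF2 hm hB'
    refine ⟨w, ?_, ?_⟩
    · rw [hHo, appo] at hw1; exact hw1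
    · rw [hF2, appp] at hw2; exact hw2
end

section
/- Let (e,h,f) be an sl₂-triple in Matrix (Fin n) (Fin n) ℂ, let W := {B : Matrix (Fin n) (Fin n) ℂ | h*B - B*h = -B} be the (−1)-eigenspace of ad h, and define σ(B,B') := Matrix.trace ((e*B + B*e) * B'). Then: (a) σ(B,B') = σ(B',B) for all B, B' : Matrix (Fin n) (Fin n) ℂ (σ is symmetric); (b) if B ∈ W and σ(B,B') = 0 for all B' ∈ W, then B = 0 (σ is non-degenerate on W). -/
/-!
On matrices, `E = (e * · + · * e)`, `H = (h * · - · * h)` and `F = (f * · + · * f)` form an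
`sl₂`-triple of endomorphisms, `W = ker (H + 1)` and `σ (B, B') = tr (E B * B')`. Symmetry of `σ`
is cyclicity of the trace. For `B ∈ W`, the matrix `Y = E B` satisfies `H Y = Y`, so `tr (Y * ·)`
vanishes on `range (H + 1)`, and by hypothesis also on `ker (H + 1)`. In a finite-dimensional
representation of `sl₂` the operator `H` has no Jordan blocks, so these two subspaces span, hence
`Y = 0`; then `B ≠ 0` would be a primitive vector of weight `-1`, but such weights are natural
numbers.

No Jordan blocks: if `(H - μ)² v = 0 ≠ (H - μ) v`, pushing `v` up to the top of its `E`-string gives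
`x` and a primitive `p` with `H x = θ x + p`. Inside one generalized eigenspace of the Casimir all
primitive vectors have the same weight, which forces `E x = 0`, and then the `F`-string through `x`
and `p` cannot terminate consistently.
-/

attribute [local instance] LieRing.ofAssociativeRing

namespace IsSl2Triple

variable {K V : Type*} [Field K] [AddCommGroup V] [Module K V] {H E F : Module.End K V}

lemma mul_e (t : IsSl2Triple H E F) : H * E = E * H + (2 : K) • E := by
  rw [← t.lie_h_e_smul K, Ring.lie_def]; abel

lemma mul_f (t : IsSl2Triple H E F) : H * F = F * H - (2 : K) • F := by
  rw [sub_eq_add_neg, ← t.lie_lie_smul_f K, Ring.lie_def]; abel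

lemma e_mul_f (t : IsSl2Triple H E F) : E * F = F * E + H := by
  rw [← t.lie_e_f, Ring.lie_def]; abel

lemma mul_pow_e (t : IsSl2Triple H E F) (k : ℕ) :
    H * E ^ k = E ^ k * H + (2 * k : K) • E ^ k := by
  induction k with
  | zero => simp
  | succ k ih =>
    rw [pow_succ, ← mul_assoc, ih, add_mul, mul_assoc, t.mul_e]
    simp only [mul_add, mul_smul_comm, smul_mul_assoc, mul_assoc, Nat.cast_succ]
    module

lemma mul_pow_f (t : IsSl2Triple H E F) (k : ℕ) :
    H * F ^ k = F ^ k * H - (2 * k : K) • F ^ k := by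
  induction k with
  | zero => simp
  | succ k ih =>
    rw [pow_succ, ← mul_assoc, ih, sub_mul, mul_assoc, t.mul_f]
    simp only [mul_sub, mul_smul_comm, smul_mul_assoc, mul_assoc, Nat.cast_succ]
    module

lemma e_mul_pow_succ_f (t : IsSl2Triple H E F) (k : ℕ) :
    E * F ^ (k + 1) =
      F ^ (k + 1) * E + (k + 1 : K) • (F ^ k * H) - ((k + 1) * k : K) • F ^ k := by
  induction k with
  | zero => simp [t.e_mul_f]
  | succ k ih =>
    rw [pow_succ F (k + 1), ← mul_assoc, ih]
    simp only [add_mul, sub_mul, smul_mul_assoc, mul_assoc, t.e_mul_f, t.mul_f, pow_succ,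
      mul_add, mul_sub, mul_smul_comm, Nat.cast_succ]
    module

def casimir (H E F : Module.End K V) : Module.End K V := (4 : K) • (F * E) + H * H + (2 : K) • H

lemma commute_casimir_e (t : IsSl2Triple H E F) : Commute (casimir H E F) E := by
  have he (X : Module.End K V) : H * (E * X) = E * (H * X) + (2 : K) • (E * X) := by
    rw [← mul_assoc, t.mul_e, add_mul, smul_mul_assoc, mul_assoc]
  have hef (X : Module.End K V) : E * (F * X) = F * (E * X) + H * X := by
    rw [← mul_assoc, t.e_mul_f, add_mul, mul_assoc]
  simp only [Commute, SemiconjBy, casimir, add_mul, mul_add, smul_mul_assoc, mul_smul_comm,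
    mul_assoc, he, hef, t.mul_e, smul_add, smul_smul]
  module

lemma commute_casimir_h (t : IsSl2Triple H E F) : Commute (casimir H E F) H := by
  have hf (X : Module.End K V) : H * (F * X) = F * (H * X) - (2 : K) • (F * X) := by
    rw [← mul_assoc, t.mul_f, sub_mul, smul_mul_assoc, mul_assoc]
  simp only [Commute, SemiconjBy, casimir, add_mul, mul_add, smul_mul_assoc, mul_smul_comm,
    mul_assoc, hf, t.mul_e, smul_add, smul_sub, smul_smul]
  module

namespace HasPrimitiveVectorWith

variable {t : IsSl2Triple H E F} {p : V} {θ : K}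

lemma casimir_apply (P : t.HasPrimitiveVectorWith p θ) : casimir H E F p = (θ * (θ + 2)) • p := by
  have hH : H p = θ • p := P.lie_h
  have hE : E p = 0 := P.lie_e
  simp only [casimir, LinearMap.add_apply, LinearMap.smul_apply, Module.End.mul_apply, hE, hH,
    map_zero, map_smul, smul_zero]
  module

lemma mul_add_two_eq_of_mem_maxGenEigenspace (P : t.HasPrimitiveVectorWith p θ) {c : K}
    (hp : p ∈ (casimir H E F).maxGenEigenspace c) : θ * (θ + 2) = c := by
  by_contra hne
  refine P.ne_zero ((Module.End.disjoint_genEigenspace _ hne 1 ⊤).le_bot ⟨?_, hp⟩)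
  exact Module.End.mem_genEigenspace_one.mpr P.casimir_apply

end HasPrimitiveVectorWith

end IsSl2Triple

lemma Module.End.exists_eq_zero_of_apply_eq_smul_of_injective {K V : Type*} [Field K]
    [AddCommGroup V] [Module K V] [FiniteDimensional K V] (T : Module.End K V) {v : ℕ → V}
    {μ : ℕ → K} (hμ : Function.Injective μ) (hv : ∀ k, T (v k) = μ k • v k) : ∃ k, v k = 0 := by
  by_contra! hne
  have hli : LinearIndependent K v :=
    T.eigenvectors_linearIndependent' μ hμ v fun k => ⟨mem_genEigenspace_one.mpr (hv k), hne k⟩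
  exact Set.infinite_range_of_injective hli.injective <|
    LinearIndependent.set_finite_of_isNoetherian <|
      (linearIndepOn_id_range_iff hli.injective).mpr hli

namespace IsSl2Triple

variable {K V : Type*} [Field K] [CharZero K] [AddCommGroup V] [Module K V] [FiniteDimensional K V]
  {H E F : Module.End K V}

lemma exists_hasPrimitiveVectorWith_pow_e (t : IsSl2Triple H E F) {w : V} {μ : K} (hw0 : w ≠ 0)
    (hw : H w = μ • w) : ∃ r : ℕ, t.HasPrimitiveVectorWith ((E ^ r) w) (μ + 2 * r) := by
  have hstring (k : ℕ) : H ((E ^ k) w) = (μ + 2 * k) • (E ^ k) w := by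
    rw [← Module.End.mul_apply, t.mul_pow_e, LinearMap.add_apply, Module.End.mul_apply, hw]
    simp only [map_smul, LinearMap.smul_apply, add_smul]
  have hinj : Function.Injective fun k : ℕ => μ + 2 * k := fun a b hab => by simpa using hab
  obtain ⟨k, hk⟩ := H.exists_eq_zero_of_apply_eq_smul_of_injective hinj hstring
  obtain ⟨r, hr, hr1⟩ := Nat.exists_not_and_succ_of_not_zero_of_exists (p := fun k => (E ^ k) w = 0)
    (by simpa using hw0) ⟨k, hk⟩
  exact ⟨r, hr, hstring r, by simpa [pow_succ'] using hr1⟩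

namespace HasPrimitiveVectorWith

variable {t : IsSl2Triple H E F} {p : V} {θ : K}

lemma apply_h_ne_smul_add (P : t.HasPrimitiveVectorWith p θ) {x : V} (hx : E x = 0) :
    H x ≠ θ • x + p := by
  intro hHx
  obtain ⟨m, hm⟩ := P.exists_nat
  have hFp : (F ^ (m + 1)) p = 0 := by simpa using P.pow_toEnd_f_eq_zero_of_eq_nat hm
  have hstring (k : ℕ) : H ((F ^ k) x) = (θ - 2 * k) • (F ^ k) x + (F ^ k) p := by
    rw [← Module.End.mul_apply, t.mul_pow_f, LinearMap.sub_apply, Module.End.mul_apply, hHx]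
    simp only [map_add, map_smul, LinearMap.smul_apply]
    module
  have hx0 : x ≠ 0 := by
    rintro rfl
    exact P.ne_zero (by simpa using hHx.symm)
  obtain ⟨M, hM, hM1⟩ : ∃ M, (F ^ M) x ≠ 0 ∧ (F ^ (M + 1)) x = 0 := by
    refine Nat.exists_not_and_succ_of_not_zero_of_exists (p := fun k => (F ^ k) x = 0)
      (by simpa using hx0) ?_
    have htail (k : ℕ) : H ((F ^ (k + (m + 1))) x) =
        (θ - 2 * (k + (m + 1) : ℕ)) • (F ^ (k + (m + 1))) x := by
      rw [hstring, pow_add, Module.End.mul_apply _ _ p, hFp, map_zero, add_zero]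
    have hinj : Function.Injective fun k : ℕ => θ - 2 * (k + (m + 1) : ℕ) :=
      fun a b hab => by simpa using hab
    obtain ⟨k, hk⟩ := H.exists_eq_zero_of_apply_eq_smul_of_injective hinj htail
    exact ⟨_, hk⟩
  have ha : (θ - M) • (F ^ M) x + (F ^ M) p = 0 := by
    have h := LinearMap.congr_fun (t.e_mul_pow_succ_f M) x
    simp only [Module.End.mul_apply, LinearMap.add_apply, LinearMap.sub_apply,
      LinearMap.smul_apply, hM1, hx, hHx, map_zero, map_add, map_smul] at h
    have h' : ((M + 1 : K)) • ((θ - M) • (F ^ M) x + (F ^ M) p) = 0 := by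
      rw [h]; module
    exact (smul_eq_zero.mp h').resolve_left (Nat.cast_add_one_ne_zero M)
  have hb : (θ - M) • (F ^ M) p = 0 := by
    have hHp : H ((F ^ M) p) = (θ - 2 * M) • (F ^ M) p := by simpa using P.lie_h_pow_toEnd_f M
    have h := congrArg H ha
    rw [map_add, map_smul, hstring, hHp, map_zero] at h
    linear_combination (norm := module) h - (θ - 2 * M) • ha
  by_cases hθ : θ = M
  · rw [hθ, sub_self, zero_smul, zero_add] at ha
    exact (by simpa using P.pow_toEnd_f_ne_zero_of_eq_nat hθ le_rfl : (F ^ M) p ≠ 0) ha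
  · have hFMp : (F ^ M) p = 0 := (smul_eq_zero.mp hb).resolve_left (sub_ne_zero.mpr hθ)
    rw [hFMp, add_zero] at ha
    exact hM ((smul_eq_zero.mp ha).resolve_left (sub_ne_zero.mpr hθ))

end HasPrimitiveVectorWith

lemma apply_h_eq_smul_of_mem_maxGenEigenspace_casimir (t : IsSl2Triple H E F) {c μ : K} {v : V}
    (hv : v ∈ (casimir H E F).maxGenEigenspace c) (hw : H (H v - μ • v) = μ • (H v - μ • v)) :
    H v = μ • v := by
  set w := H v - μ • v
  by_contra hne
  have hVc {y : V} (X : Module.End K V) (hX : Commute (casimir H E F) X)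
      (hy : y ∈ (casimir H E F).maxGenEigenspace c) : X y ∈ (casimir H E F).maxGenEigenspace c :=
    Module.End.mapsTo_maxGenEigenspace_of_comm hX c hy
  have hEpow (k : ℕ) : Commute (casimir H E F) (E ^ k) := t.commute_casimir_e.pow_right k
  obtain ⟨r, P⟩ := t.exists_hasPrimitiveVectorWith_pow_e (sub_ne_zero.mpr hne) hw
  have hx : H ((E ^ r) v) = (μ + 2 * r) • (E ^ r) v + (E ^ r) w := by
    rw [← Module.End.mul_apply, t.mul_pow_e, LinearMap.add_apply, Module.End.mul_apply,
      show H v = μ • v + w by simp [w]]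
    simp only [map_add, map_smul, LinearMap.smul_apply]
    module
  refine P.apply_h_ne_smul_add ?_ hx
  -- Otherwise `E x` tops off to a second primitive vector in the same Casimir eigenspace, of weight
  -- `θ + 2 + 2s` where `θ = μ + 2r`; but `θ ↦ θ (θ + 2)` is injective on natural numbers.
  by_contra hu
  have hHu : H (E ((E ^ r) v)) = (μ + 2 * r + 2) • E ((E ^ r) v) := by
    have hEp : E ((E ^ r) w) = 0 := P.lie_e
    rw [← Module.End.mul_apply, t.mul_e, LinearMap.add_apply, Module.End.mul_apply, hx, map_add,
      hEp]
    simp only [map_smul, LinearMap.smul_apply]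
    module
  obtain ⟨s, Q⟩ := t.exists_hasPrimitiveVectorWith_pow_e hu hHu
  have hp := P.mul_add_two_eq_of_mem_maxGenEigenspace
    (hVc _ (hEpow r) (sub_mem (hVc H t.commute_casimir_h hv) (Submodule.smul_mem _ μ hv)))
  have hq := Q.mul_add_two_eq_of_mem_maxGenEigenspace
    (hVc _ (hEpow s) (hVc E t.commute_casimir_e (hVc _ (hEpow r) hv)))
  obtain ⟨m, hm⟩ := P.exists_nat
  have : (2 * s + 2) * (2 * m + 2 * s + 4) = 0 := by
    exact_mod_cast (by push_cast; linear_combination hq - hp + (-(2 * s + 2) * 2) * hm :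
      (((2 * s + 2) * (2 * m + 2 * s + 4) : ℕ) : K) = 0)
  exact absurd this (by positivity)

theorem ker_sub_algebraMap_sq_le_ker [IsAlgClosed K] (t : IsSl2Triple H E F) (μ : K) :
    LinearMap.ker ((H - algebraMap K _ μ) ^ 2) ≤ LinearMap.ker (H - algebraMap K _ μ) := by
  set T := H - algebraMap K _ μ
  have hT (v : V) : T v = H v - μ • v := by simp [T]
  have hcomm : Commute (casimir H E F) (T ^ 2) :=
    (t.commute_casimir_h.sub_right (Algebra.commutes μ _).symm).pow_right 2
  have hinv : ∀ v ∈ LinearMap.ker (T ^ 2), casimir H E F v ∈ LinearMap.ker (T ^ 2) := by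
    intro v hv
    rw [LinearMap.mem_ker, ← Module.End.mul_apply, ← hcomm.eq, Module.End.mul_apply,
      LinearMap.mem_ker.mp hv, map_zero]
  rw [Submodule.eq_iSup_inf_genEigenspace ⊤ hinv (Module.End.iSup_maxGenEigenspace_eq_top _)]
  refine iSup_le fun c v ⟨hv2, hvc⟩ => ?_
  have hv2 : T (T v) = 0 := by simpa [sq] using hv2
  rw [hT, hT] at hv2
  rw [LinearMap.mem_ker, hT,
    t.apply_h_eq_smul_of_mem_maxGenEigenspace_casimir hvc (sub_eq_zero.mp hv2), sub_self]

end IsSl2Triple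

lemma LinearMap.isCompl_ker_range_of_ker_sq_le {K V : Type*} [Field K] [AddCommGroup V]
    [Module K V] [FiniteDimensional K V] {T : Module.End K V} (h : ker (T ^ 2) ≤ ker T) :
    IsCompl (ker T) (range T) := by
  refine (Submodule.isCompl_iff_disjoint _ _ ?_).mpr ?_
  · rw [add_comm, LinearMap.finrank_range_add_finrank_ker]
  rw [Submodule.disjoint_def]
  rintro _ hx ⟨y, rfl⟩
  exact h (by simpa [sq] using hx)

lemma isSl2Triple_anticommutator {K A : Type*} [CommRing K] [Ring A] [Algebra K A] {h e f : A}
    (h1 : h * e - e * h = 2 • e) (h2 : h * f - f * h = -(2 • f)) (h3 : e * f - f * e = h)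
    (hne : LinearMap.mulLeft K h - LinearMap.mulRight K h ≠ 0) :
    IsSl2Triple (LinearMap.mulLeft K h - LinearMap.mulRight K h)
      (LinearMap.mulLeft K e + LinearMap.mulRight K e)
      (LinearMap.mulLeft K f + LinearMap.mulRight K f) where
  h_ne_zero := hne
  lie_e_f := by
    ext X
    simp only [Ring.lie_def, LinearMap.sub_apply, LinearMap.add_apply, Module.End.mul_apply,
      LinearMap.mulLeft_apply, LinearMap.mulRight_apply, ← h3]
    noncomm_ring
  lie_h_e_nsmul := by
    ext X
    simp only [Ring.lie_def, LinearMap.sub_apply, LinearMap.add_apply, Module.End.mul_apply,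
      LinearMap.mulLeft_apply, LinearMap.mulRight_apply, LinearMap.smul_apply]
    calc _ = (h * e - e * h) * X + X * (h * e - e * h) := by noncomm_ring
      _ = _ := by rw [h1, smul_add, smul_mul_assoc, mul_smul_comm]
  lie_h_f_nsmul := by
    ext X
    simp only [Ring.lie_def, LinearMap.sub_apply, LinearMap.add_apply, Module.End.mul_apply,
      LinearMap.mulLeft_apply, LinearMap.mulRight_apply, LinearMap.smul_apply, LinearMap.neg_apply]
    calc _ = (h * f - f * h) * X + X * (h * f - f * h) := by noncomm_ring
      _ = _ := by rw [h2, neg_mul, mul_neg, smul_mul_assoc, mul_smul_comm, smul_add, neg_add]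

namespace Matrix

variable {ι R : Type*} [Fintype ι]

lemma trace_anticommutator_mul_comm [CommRing R] (e B B' : Matrix ι ι R) :
    trace ((e * B + B * e) * B') = trace ((e * B' + B' * e) * B) := by
  simp only [add_mul, trace_add]
  rw [trace_mul_cycle e B B', trace_mul_cycle e B' B, add_comm]

lemma trace_mul_sub_mul_add_self_eq_zero [CommRing R] {h Y : Matrix ι ι R}
    (hY : h * Y - Y * h = Y) (Z : Matrix ι ι R) : trace (Y * (h * Z - Z * h + Z)) = 0 := by
  calc trace (Y * (h * Z - Z * h + Z)) = trace ((Y - (h * Y - Y * h)) * Z) := by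
        simp only [mul_add, mul_sub, sub_mul, trace_add, trace_sub, ← mul_assoc,
          trace_mul_cycle Y Z h]
        ring
    _ = 0 := by rw [hY, sub_self, zero_mul, trace_zero]

theorem eq_zero_of_trace_anticommutator_mul_eq_zero [Field R] [IsAlgClosed R] [CharZero R]
    [DecidableEq ι] {h e f B : Matrix ι ι R}
    (h1 : h * e - e * h = 2 • e) (h2 : h * f - f * h = -(2 • f)) (h3 : e * f - f * e = h)
    (hB : h * B - B * h = -B)
    (hσ : ∀ B', h * B' - B' * h = -B' → trace ((e * B + B * e) * B') = 0) : B = 0 := by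
  set H := LinearMap.mulLeft R h - LinearMap.mulRight R h
  have hH (X : Matrix ι ι R) : H X = h * X - X * h := rfl
  by_cases hH0 : H = 0
  · rw [← neg_eq_zero, ← hB, ← hH, hH0, LinearMap.zero_apply]
  have t := isSl2Triple_anticommutator h1 h2 h3 hH0
  have hY : h * (e * B + B * e) - (e * B + B * e) * h = e * B + B * e := by
    calc _ = (h * e - e * h) * B + e * (h * B - B * h) + (h * B - B * h) * e
          + B * (h * e - e * h) := by noncomm_ring
      _ = e * B + B * e := by
          rw [h1, hB, smul_mul_assoc, mul_smul_comm, two_smul, two_smul]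
          noncomm_ring
  have hsplit := LinearMap.isCompl_ker_range_of_ker_sq_le (t.ker_sub_algebraMap_sq_le_ker (-1))
  have hY0 : e * B + B * e = 0 := by
    refine ext_iff_trace_mul_right.mpr fun Z => ?_
    obtain ⟨Z₁, hZ₁, _, ⟨Z₂, rfl⟩, rfl⟩ :=
      Submodule.mem_sup.mp (hsplit.sup_eq_top ▸ Submodule.mem_top : Z ∈ _ ⊔ _)
    have hZ₁ : h * Z₁ - Z₁ * h = -Z₁ := by simpa [hH, add_eq_zero_iff_eq_neg] using hZ₁
    simpa [mul_add, hσ Z₁ hZ₁, hH] using trace_mul_sub_mul_add_self_eq_zero hY Z₂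
  by_contra hB0
  have P : t.HasPrimitiveVectorWith B (-1 : R) := ⟨hB0, by simpa [hH] using hB, hY0⟩
  obtain ⟨m, hm⟩ := P.exists_nat
  exact Nat.cast_add_one_ne_zero (R := R) m (by linear_combination -hm)

end Matrix

/-- For an `sl₂`-triple `(e, h, f)` of `n × n` complex matrices, the form
`σ(B, B') = trace ((e*B + B*e) * B')` is (a) symmetric, and (b) non-degenerate on
the `(-1)`-eigenspace `W = {B | h*B - B*h = -B}` of `ad h`. This encodes that `ω_χ`
restricts to a non-degenerate symmetric form on the odd part of `g(-1)`. -/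
theorem stmt12 (n : ℕ) (e h f : Matrix (Fin n) (Fin n) ℂ)
    (h1 : h * e - e * h = 2 • e) (h2 : h * f - f * h = -(2 • f))
    (h3 : e * f - f * e = h) :
    (∀ B B' : Matrix (Fin n) (Fin n) ℂ,
      Matrix.trace ((e * B + B * e) * B') = Matrix.trace ((e * B' + B' * e) * B)) ∧
    (∀ B ∈ {B : Matrix (Fin n) (Fin n) ℂ | h * B - B * h = -B},
      (∀ B' ∈ {B : Matrix (Fin n) (Fin n) ℂ | h * B - B * h = -B},
        Matrix.trace ((e * B + B * e) * B') = 0) → B = 0) :=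
  ⟨Matrix.trace_anticommutator_mul_comm e,
    fun _ hB hσ => Matrix.eq_zero_of_trace_anticommutator_mul_eq_zero h1 h2 h3 hB hσ⟩
end
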